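/- arXiv:2602.11115 — 7 statements merged into one kernel-verified Lean document; each statement's English description precedes it below -/
import Mathlib

section
/- Let n ≥ 3 and let Ω ⊆ ℝⁿ be open. Fix integers 1 ≤ m₁ ≤ m₂ ≤ n and real constants a₁,…,a_{m₁}, b₁,…,b_{m₂} with Σ_{i=1}^{m₁} aᵢ ≠ 0 and bⱼ ≠ 0 for all j. Set M(x) = Σ_{i=1}^{m₁} aᵢ xᵢ, P(x) = Σ_{j=1}^{m₂} bⱼ xⱼ, η = Σ_{j=1}^{m₂} bⱼ², θ = −2 Σ_{i=1}^{m₁} aᵢ bᵢ, δ = Σ_{i=1}^{m₁} aᵢ², and assume D := 4ηδ − θ² > 0. Let k ≠ 0 and k₁ be real constants and define u(x) = k₁ + (2k/√D)·arctan((θ·P(x) + 2η·M(x))/(√D·P(x))). Suppose Ω ⊆ {x : P(x) ≠ 0} and u > 0 on Ω, and set N = 1/u, φ = N^{1/(n−2)}, ψ = √((n−1)/(2(n−2)))·(1 − N). Then the triple (φ, N, ψ) satisfies the electrostatic PDE system with cosmological constant Λ = 0 on Ω. -/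
/-!
With `u = 1 / N`, the Majumdar–Papapetrou ansatz `φ = N ^ (1 / (n - 2))`,
`ψ = √((n - 1) / (2 (n - 2))) (1 - N)` makes equation (i) of the system hold identically, even for
`i = j`, and turns every summand of the other three into a multiple of `∂ₖ∂ₖu`; so every positive
harmonic `u` gives a solution with `Λ = 0`. The given `u` is `k₁ + (2k/√D) arctan (b / a)` for the
linear forms `a = √D P` and `b = θ P + 2η M`, whose coefficient vectors are orthogonal and of equal
length precisely because `θ = -2 Σ aᵢbᵢ` and `D = 4ηδ - θ²`. For such forms `arctan (b / a)` is,
locally and up to a constant, the imaginary part of `log (a + i b)`, a holomorphic function of the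
isotropic complex linear form `a + i b`, hence harmonic.
-/

/-- The partial derivative of `f : ℝⁿ → ℝ` in the `i`-th coordinate direction. -/
noncomputable def pd {n : ℕ} (i : Fin n) (f : (Fin n → ℝ) → ℝ) : (Fin n → ℝ) → ℝ :=
  fun x => fderiv ℝ f x (Pi.single i 1)

/-- The electrostatic PDE system with cosmological constant `Λ` on `Ω ⊆ ℝⁿ`
(equations (2.2)-(2.5) of the paper). -/
def ElectrostaticSystem {n : ℕ} (Ω : Set (Fin n → ℝ)) (φ N ψ : (Fin n → ℝ) → ℝ)
    (Λ : ℝ) : Prop :=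
  ∀ x ∈ Ω,
    (∀ i j : Fin n, i ≠ j →
      ((n : ℝ) - 2) * N x * pd i (pd j φ) x - φ x * pd i (pd j N) x
        - pd i φ x * pd j N x - pd j φ x * pd i N x
        + (2 * φ x / N x) * (pd i ψ x * pd j ψ x) = 0) ∧
    (∀ i : Fin n,
      φ x * (((n : ℝ) - 2) * N x * pd i (pd i φ) x - φ x * pd i (pd i N) x
          - 2 * pd i φ x * pd i N x + (2 * φ x / N x) * (pd i ψ x) ^ 2)
        + ∑ k : Fin n, (φ x * N x * pd k (pd k φ) x + φ x * pd k φ x * pd k N x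
          - ((n : ℝ) - 1) * N x * (pd k φ x) ^ 2
          - (2 / (((n : ℝ) - 1) * N x)) * (φ x) ^ 2 * (pd k ψ x) ^ 2)
        = (2 * Λ / ((n : ℝ) - 1)) * N x) ∧
    (∑ k : Fin n, (N x * φ x * pd k (pd k ψ) x
        - ((n : ℝ) - 2) * N x * pd k φ x * pd k ψ x
        - φ x * pd k ψ x * pd k N x) = 0) ∧
    (∑ k : Fin n, ((φ x) ^ 2 * N x * pd k (pd k N) x
        - ((n : ℝ) - 2) * φ x * pd k φ x * N x * pd k N x
        - (2 * ((n : ℝ) - 2) / ((n : ℝ) - 1)) * (φ x) ^ 2 * (pd k ψ x) ^ 2)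
      = -(2 * Λ / ((n : ℝ) - 1)) * (N x) ^ 2)

open Filter Topology

section PartialDerivatives

variable {n : ℕ} {f u : (Fin n → ℝ) → ℝ} {x : Fin n → ℝ}

theorem HasFDerivAt.pd_eq {L : (Fin n → ℝ) →L[ℝ] ℝ} (h : HasFDerivAt f L x) (i : Fin n) :
    pd i f x = L (Pi.single i 1) := by
  rw [pd, h.fderiv]

theorem Filter.EventuallyEq.pd_eq {g : (Fin n → ℝ) → ℝ} (h : f =ᶠ[𝓝 x] g) (i : Fin n) :
    pd i f x = pd i g x := by
  simp only [pd, h.fderiv_eq]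

theorem pd_comp {F : ℝ → ℝ} {F' : ℝ} (hF : HasDerivAt F F' (u x)) (hu : DifferentiableAt ℝ u x)
    (i : Fin n) : pd i (fun y => F (u y)) x = F' * pd i u x := by
  refine ((hF.comp_hasFDerivAt x hu.hasFDerivAt).pd_eq i).trans ?_
  simp [pd]

theorem pd_pd_comp {V : Set (Fin n → ℝ)} (hV : IsOpen V) (hx : x ∈ V)
    (hu : ∀ y ∈ V, DifferentiableAt ℝ u y) {F F' : ℝ → ℝ} {F'' : ℝ}
    (hF : ∀ y ∈ V, HasDerivAt F (F' (u y)) (u y)) (hF' : HasDerivAt F' F'' (u x)) {j : Fin n}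
    (hdu : DifferentiableAt ℝ (pd j u) x) (i : Fin n) :
    pd i (pd j fun y => F (u y)) x = F'' * pd i u x * pd j u x + F' (u x) * pd i (pd j u) x := by
  have hloc : pd j (fun y => F (u y)) =ᶠ[𝓝 x] fun y => F' (u y) * pd j u y :=
    eventually_of_mem (hV.mem_nhds hx) fun y hy => pd_comp (hF y hy) (hu y hy) j
  refine (hloc.pd_eq i).trans <|
    (((hF'.comp_hasFDerivAt x (hu x hx).hasFDerivAt).mul hdu.hasFDerivAt).pd_eq i).trans ?_
  simp [pd]
  ring

end PartialDerivatives

def HasPartialsAt {n : ℕ} (f : (Fin n → ℝ) → ℝ) (f' : Fin n → ℝ) (x : Fin n → ℝ) : Prop :=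
  ∃ L : (Fin n → ℝ) →L[ℝ] ℝ, HasFDerivAt f L x ∧ ∀ i, L (Pi.single i 1) = f' i

namespace HasPartialsAt

variable {n : ℕ} {f g : (Fin n → ℝ) → ℝ} {f' g' : Fin n → ℝ} {x : Fin n → ℝ}

theorem differentiableAt (hf : HasPartialsAt f f' x) : DifferentiableAt ℝ f x :=
  let ⟨_, hL, _⟩ := hf; hL.differentiableAt

theorem pd_eq (hf : HasPartialsAt f f' x) (i : Fin n) : pd i f x = f' i :=
  let ⟨_, hL, hLi⟩ := hf; (hL.pd_eq i).trans (hLi i)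

theorem const_add (hf : HasPartialsAt f f' x) (c : ℝ) : HasPartialsAt (fun y => c + f y) f' x :=
  let ⟨L, hL, hLi⟩ := hf; ⟨L, hL.const_add c, hLi⟩

theorem const_mul (hf : HasPartialsAt f f' x) (c : ℝ) :
    HasPartialsAt (fun y => c * f y) (fun i => c * f' i) x :=
  let ⟨L, hL, hLi⟩ := hf; ⟨c • L, hL.const_mul c, fun i => by simp [hLi i]⟩

theorem add (hf : HasPartialsAt f f' x) (hg : HasPartialsAt g g' x) :
    HasPartialsAt (fun y => f y + g y) (fun i => f' i + g' i) x :=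
  let ⟨L, hL, hLi⟩ := hf; let ⟨L', hL', hLi'⟩ := hg
  ⟨L + L', hL.add hL', fun i => by simp [hLi i, hLi' i]⟩

theorem sub (hf : HasPartialsAt f f' x) (hg : HasPartialsAt g g' x) :
    HasPartialsAt (fun y => f y - g y) (fun i => f' i - g' i) x :=
  let ⟨L, hL, hLi⟩ := hf; let ⟨L', hL', hLi'⟩ := hg
  ⟨L - L', hL.sub hL', fun i => by simp [hLi i, hLi' i]⟩

theorem mul (hf : HasPartialsAt f f' x) (hg : HasPartialsAt g g' x) :
    HasPartialsAt (fun y => f y * g y) (fun i => f x * g' i + g x * f' i) x :=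
  let ⟨L, hL, hLi⟩ := hf; let ⟨L', hL', hLi'⟩ := hg
  ⟨f x • L' + g x • L, hL.mul hL', fun i => by simp [hLi i, hLi' i]⟩

theorem _root_.HasDerivAt.comp_hasPartialsAt {F : ℝ → ℝ} {F' : ℝ} (hF : HasDerivAt F F' (f x))
    (hf : HasPartialsAt f f' x) : HasPartialsAt (fun y => F (f y)) (fun i => F' * f' i) x :=
  let ⟨L, hL, hLi⟩ := hf; ⟨F' • L, hF.comp_hasFDerivAt x hL, fun i => by simp [hLi i]⟩

theorem div (hf : HasPartialsAt f f' x) (hg : HasPartialsAt g g' x) (hx : g x ≠ 0) :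
    HasPartialsAt (fun y => f y / g y) (fun i => (g x * f' i - f x * g' i) / g x ^ 2) x := by
  convert hf.mul ((hasDerivAt_inv hx).comp_hasPartialsAt hg) using 1
  · simp only [div_eq_mul_inv]
  · ext i
    field_simp
    ring

end HasPartialsAt

theorem hasPartialsAt_dotProduct {n : ℕ} (a x : Fin n → ℝ) :
    HasPartialsAt (fun y => a ⬝ᵥ y) a x := by
  refine ⟨∑ i, a i • ContinuousLinearMap.proj i, ?_, fun j => ?_⟩
  · exact HasFDerivAt.fun_sum fun i _ => (hasFDerivAt_apply i x).const_mul (a i)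
  · simp [Pi.single_apply]

section ReciprocalDerivatives

variable {t : ℝ}

theorem hasDerivAt_one_div (ht : t ≠ 0) : HasDerivAt (fun s => 1 / s) (-1 / t ^ 2) t := by
  simpa [one_div, neg_div] using hasDerivAt_inv ht

theorem hasDerivAt_neg_one_div_sq (ht : t ≠ 0) :
    HasDerivAt (fun s => -1 / s ^ 2) (2 / t ^ 3) t := by
  refine ((hasDerivAt_const t (-1 : ℝ)).fun_div (hasDerivAt_pow 2 t)
    (pow_ne_zero 2 ht)).congr_deriv ?_
  field_simp
  ring

theorem hasDerivAt_one_div_rpow (ht : 0 < t) (p : ℝ) :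
    HasDerivAt (fun s => (1 / s) ^ p) (-p * (1 / t) ^ p / t) t := by
  convert (hasDerivAt_inv ht.ne').rpow_const (p := p) (Or.inl (inv_ne_zero ht.ne')) using 1
  · ext s; simp [one_div]
  · rw [Real.rpow_sub_one (inv_ne_zero ht.ne'), one_div]
    field_simp

theorem hasDerivAt_neg_mul_one_div_rpow_div (ht : 0 < t) (p : ℝ) :
    HasDerivAt (fun s => -p * (1 / s) ^ p / s) (p * (p + 1) * (1 / t) ^ p / t ^ 2) t := by
  refine (((hasDerivAt_one_div_rpow ht p).const_mul (-p)).fun_div (hasDerivAt_id' t)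
    ht.ne').congr_deriv ?_
  field_simp
  ring

end ReciprocalDerivatives

section PartialsOfReciprocal

variable {n : ℕ} {V : Set (Fin n → ℝ)} {u : (Fin n → ℝ) → ℝ} {x : Fin n → ℝ}

theorem pd_one_div (hu : DifferentiableAt ℝ u x) (hx : u x ≠ 0) (i : Fin n) :
    pd i (fun y => 1 / u y) x = -1 / u x ^ 2 * pd i u x :=
  pd_comp (hasDerivAt_one_div hx) hu i

theorem pd_pd_one_div (hV : IsOpen V) (hu : ∀ y ∈ V, DifferentiableAt ℝ u y)
    (hpos : ∀ y ∈ V, 0 < u y) (hx : x ∈ V) {j : Fin n} (hdu : DifferentiableAt ℝ (pd j u) x)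
    (i : Fin n) :
    pd i (pd j fun y => 1 / u y) x =
      2 / u x ^ 3 * pd i u x * pd j u x + -1 / u x ^ 2 * pd i (pd j u) x :=
  pd_pd_comp hV hx hu (F' := fun t => -1 / t ^ 2)
    (fun y hy => hasDerivAt_one_div (hpos y hy).ne') (hasDerivAt_neg_one_div_sq (hpos x hx).ne')
    hdu i

theorem pd_one_div_rpow (hu : DifferentiableAt ℝ u x) (hx : 0 < u x) (p : ℝ) (i : Fin n) :
    pd i (fun y => (1 / u y) ^ p) x = -p * (1 / u x) ^ p / u x * pd i u x :=
  pd_comp (hasDerivAt_one_div_rpow hx p) hu i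

theorem pd_pd_one_div_rpow (hV : IsOpen V) (hu : ∀ y ∈ V, DifferentiableAt ℝ u y)
    (hpos : ∀ y ∈ V, 0 < u y) (hx : x ∈ V) {j : Fin n} (hdu : DifferentiableAt ℝ (pd j u) x)
    (p : ℝ) (i : Fin n) :
    pd i (pd j fun y => (1 / u y) ^ p) x =
      p * (p + 1) * (1 / u x) ^ p / u x ^ 2 * pd i u x * pd j u x
        + -p * (1 / u x) ^ p / u x * pd i (pd j u) x :=
  pd_pd_comp hV hx hu (F' := fun t => -p * (1 / t) ^ p / t)
    (fun y hy => hasDerivAt_one_div_rpow (hpos y hy) p)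
    (hasDerivAt_neg_mul_one_div_rpow_div (hpos x hx) p) hdu i

theorem pd_mul_one_sub_one_div (hu : DifferentiableAt ℝ u x) (hx : u x ≠ 0) (c : ℝ)
    (i : Fin n) :
    pd i (fun y => c * (1 - 1 / u y)) x = c * -(-1 / u x ^ 2) * pd i u x :=
  pd_comp (((hasDerivAt_one_div hx).const_sub 1).const_mul c) hu i

theorem pd_pd_mul_one_sub_one_div (hV : IsOpen V) (hu : ∀ y ∈ V, DifferentiableAt ℝ u y)
    (hpos : ∀ y ∈ V, 0 < u y) (hx : x ∈ V) {j : Fin n} (hdu : DifferentiableAt ℝ (pd j u) x)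
    (c : ℝ) (i : Fin n) :
    pd i (pd j fun y => c * (1 - 1 / u y)) x =
      c * -(2 / u x ^ 3) * pd i u x * pd j u x + c * -(-1 / u x ^ 2) * pd i (pd j u) x :=
  pd_pd_comp hV hx hu (F' := fun t => c * -(-1 / t ^ 2))
    (fun y hy => ((hasDerivAt_one_div (hpos y hy).ne').const_sub 1).const_mul c)
    ((hasDerivAt_neg_one_div_sq (hpos x hx).ne').neg.const_mul c) hdu i

end PartialsOfReciprocal

def IsHarmonicOn {n : ℕ} (u : (Fin n → ℝ) → ℝ) (V : Set (Fin n → ℝ)) : Prop :=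
  ∀ x ∈ V, DifferentiableAt ℝ u x ∧ (∀ j, DifferentiableAt ℝ (pd j u) x) ∧
    ∑ k, pd k (pd k u) x = 0

section MajumdarPapapetrou

variable {n : ℕ} {V : Set (Fin n → ℝ)} {u : (Fin n → ℝ) → ℝ} {x : Fin n → ℝ}

theorem pd_mul_one_sub_one_div_mul_self {c : ℝ}
    (hc : c ^ 2 = ((n : ℝ) - 1) / (2 * ((n : ℝ) - 2))) (hu : DifferentiableAt ℝ u x)
    (hx : u x ≠ 0) (i j : Fin n) :
    pd i (fun y => c * (1 - 1 / u y)) x * pd j (fun y => c * (1 - 1 / u y)) x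
      = ((n : ℝ) - 1) / (2 * ((n : ℝ) - 2)) * (pd i u x * pd j u x) / u x ^ 4 := by
  rw [pd_mul_one_sub_one_div hu hx, pd_mul_one_sub_one_div hu hx, ← hc]
  field_simp

theorem electrostatic_first_eq (hn : (n : ℝ) - 2 ≠ 0) (hV : IsOpen V)
    (hu : ∀ y ∈ V, DifferentiableAt ℝ u y) (hpos : ∀ y ∈ V, 0 < u y) (hx : x ∈ V)
    (hdu : ∀ j, DifferentiableAt ℝ (pd j u) x) {c : ℝ}
    (hc : c ^ 2 = ((n : ℝ) - 1) / (2 * ((n : ℝ) - 2))) (i j : Fin n) :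
    ((n : ℝ) - 2) * (1 / u x) * pd i (pd j fun y => (1 / u y) ^ (1 / ((n : ℝ) - 2))) x
      - (1 / u x) ^ (1 / ((n : ℝ) - 2)) * pd i (pd j fun y => 1 / u y) x
      - pd i (fun y => (1 / u y) ^ (1 / ((n : ℝ) - 2))) x * pd j (fun y => 1 / u y) x
      - pd j (fun y => (1 / u y) ^ (1 / ((n : ℝ) - 2))) x * pd i (fun y => 1 / u y) x
      + 2 * (1 / u x) ^ (1 / ((n : ℝ) - 2)) / (1 / u x) *
        (pd i (fun y => c * (1 - 1 / u y)) x * pd j (fun y => c * (1 - 1 / u y)) x) = 0 := by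
  have hux := (hpos x hx).ne'
  rw [pd_pd_one_div_rpow hV hu hpos hx (hdu j), pd_pd_one_div hV hu hpos hx (hdu j),
    pd_one_div_rpow (hu x hx) (hpos x hx), pd_one_div_rpow (hu x hx) (hpos x hx),
    pd_one_div (hu x hx) hux, pd_one_div (hu x hx) hux,
    pd_mul_one_sub_one_div_mul_self hc (hu x hx) hux]
  generalize (1 / u x) ^ (1 / ((n : ℝ) - 2)) = Φ
  field_simp
  ring

theorem electrostaticSystem_of_isHarmonicOn (hn : 3 ≤ n) (hV : IsOpen V) (hu : IsHarmonicOn u V)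
    (hpos : ∀ x ∈ V, 0 < u x) :
    ElectrostaticSystem V (fun x => (1 / u x) ^ ((1 : ℝ) / ((n : ℝ) - 2))) (fun x => 1 / u x)
      (fun x => √(((n : ℝ) - 1) / (2 * ((n : ℝ) - 2))) * (1 - 1 / u x)) 0 := by
  have hn3 : (3 : ℝ) ≤ n := by exact_mod_cast hn
  have hn1 : (n : ℝ) - 1 ≠ 0 := by linarith
  have hn2 : (n : ℝ) - 2 ≠ 0 := by linarith
  set p : ℝ := 1 / ((n : ℝ) - 2) with hp
  set c : ℝ := √(((n : ℝ) - 1) / (2 * ((n : ℝ) - 2)))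
  have hc : c ^ 2 = ((n : ℝ) - 1) / (2 * ((n : ℝ) - 2)) :=
    Real.sq_sqrt (div_nonneg (by linarith) (by linarith))
  have hdiff : ∀ y ∈ V, DifferentiableAt ℝ u y := fun y hy => (hu y hy).1
  intro x hx
  obtain ⟨-, hdu, hΔ⟩ := hu x hx
  have hux := hpos x hx
  have hψsq (i : Fin n) : pd i (fun y => c * (1 - 1 / u y)) x ^ 2
      = ((n : ℝ) - 1) / (2 * ((n : ℝ) - 2)) * (pd i u x * pd i u x) / u x ^ 4 := by
    rw [sq, pd_mul_one_sub_one_div_mul_self hc (hdiff x hx) hux.ne']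
  have hsum (f : Fin n → ℝ) (C : ℝ) (hf : ∀ k, f k = C * pd k (pd k u) x) : ∑ k, f k = 0 := by
    rw [Finset.sum_congr rfl fun k _ => hf k, ← Finset.mul_sum, hΔ, mul_zero]
  refine ⟨fun i j _ => electrostatic_first_eq hn2 hV hdiff hpos hx hdu hc i j, fun i => ?_, ?_, ?_⟩
  · beta_reduce
    rw [show 2 * 0 / ((n : ℝ) - 1) * (1 / u x) = (1 / u x) ^ p * 0 + 0 by ring]
    congr 1
    · congr 1
      linear_combination electrostatic_first_eq hn2 hV hdiff hpos hx hdu hc i i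
    · refine hsum _ (-p * ((1 / u x) ^ p) ^ 2 / u x ^ 2) fun k => ?_
      rw [pd_pd_one_div_rpow hV hdiff hpos hx (hdu k), pd_one_div_rpow (hdiff x hx) hux,
        pd_one_div (hdiff x hx) hux.ne', hψsq]
      generalize (1 / u x) ^ p = Φ
      rw [hp]
      field_simp
      ring
  · refine hsum _ (c * (1 / u x) ^ p / u x ^ 3) fun k => ?_
    beta_reduce
    rw [pd_pd_mul_one_sub_one_div hV hdiff hpos hx (hdu k), pd_one_div_rpow (hdiff x hx) hux,
      pd_mul_one_sub_one_div (hdiff x hx) hux.ne', pd_one_div (hdiff x hx) hux.ne']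
    generalize (1 / u x) ^ p = Φ
    rw [hp]
    field_simp
    ring
  · beta_reduce
    rw [show -(2 * 0 / ((n : ℝ) - 1)) * (1 / u x) ^ 2 = 0 by ring]
    refine hsum _ (-((1 / u x) ^ p) ^ 2 / u x ^ 3) fun k => ?_
    rw [pd_pd_one_div hV hdiff hpos hx (hdu k), pd_one_div_rpow (hdiff x hx) hux,
      pd_one_div (hdiff x hx) hux.ne', hψsq]
    generalize (1 / u x) ^ p = Φ
    rw [hp]
    field_simp
    ring

end MajumdarPapapetrou

theorem isOpen_setOf_dotProduct_ne_zero {n : ℕ} (α : Fin n → ℝ) : IsOpen {y | α ⬝ᵥ y ≠ 0} :=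
  isOpen_ne_fun (continuous_const.dotProduct continuous_id) continuous_const

section ArctanOfRatio

variable {n : ℕ} {α β : Fin n → ℝ} {x : Fin n → ℝ}

theorem hasPartialsAt_arctan_div (k₁ c : ℝ) (hx : α ⬝ᵥ x ≠ 0) :
    HasPartialsAt (fun y => k₁ + c * Real.arctan ((β ⬝ᵥ y) / (α ⬝ᵥ y)))
      (fun j => c * (β j * (α ⬝ᵥ x) - α j * (β ⬝ᵥ x)) / ((α ⬝ᵥ x) ^ 2 + (β ⬝ᵥ x) ^ 2)) x := by
  convert (((Real.hasDerivAt_arctan _).comp_hasPartialsAt ((hasPartialsAt_dotProduct β x).div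
    (hasPartialsAt_dotProduct α x) hx)).const_mul c).const_add k₁ using 1
  ext j
  field_simp

theorem hasPartialsAt_arctan_div_grad (c : ℝ) (j : Fin n) (hx : α ⬝ᵥ x ≠ 0) :
    HasPartialsAt
      (fun y => c * (β j * (α ⬝ᵥ y) - α j * (β ⬝ᵥ y)) / ((α ⬝ᵥ y) ^ 2 + (β ⬝ᵥ y) ^ 2))
      (fun i => c * ((β j * α i - α j * β i) * ((α ⬝ᵥ x) ^ 2 + (β ⬝ᵥ x) ^ 2)
          - 2 * (β j * (α ⬝ᵥ x) - α j * (β ⬝ᵥ x)) * ((α ⬝ᵥ x) * α i + (β ⬝ᵥ x) * β i))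
        / ((α ⬝ᵥ x) ^ 2 + (β ⬝ᵥ x) ^ 2) ^ 2) x := by
  have hα := hasPartialsAt_dotProduct α x
  have hβ := hasPartialsAt_dotProduct β x
  convert ((hα.const_mul (β j)).sub (hβ.const_mul (α j))).const_mul c |>.div
    (((hasDerivAt_pow 2 _).comp_hasPartialsAt hα).add
      ((hasDerivAt_pow 2 _).comp_hasPartialsAt hβ))
    (by positivity) using 1
  ext i
  simp
  ring

theorem isHarmonicOn_arctan_div (hαβ : α ⬝ᵥ β = 0) (hαα : α ⬝ᵥ α = β ⬝ᵥ β) (k₁ c : ℝ) :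
    IsHarmonicOn (fun y => k₁ + c * Real.arctan ((β ⬝ᵥ y) / (α ⬝ᵥ y))) {y | α ⬝ᵥ y ≠ 0} := by
  intro x hx
  have hgrad (j : Fin n) : pd j (fun y => k₁ + c * Real.arctan ((β ⬝ᵥ y) / (α ⬝ᵥ y))) =ᶠ[𝓝 x]
      fun y => c * (β j * (α ⬝ᵥ y) - α j * (β ⬝ᵥ y)) / ((α ⬝ᵥ y) ^ 2 + (β ⬝ᵥ y) ^ 2) :=
    eventually_of_mem ((isOpen_setOf_dotProduct_ne_zero α).mem_nhds hx) fun y hy =>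
      (hasPartialsAt_arctan_div k₁ c hy).pd_eq j
  refine ⟨(hasPartialsAt_arctan_div k₁ c hx).differentiableAt, fun j =>
    (hgrad j).differentiableAt_iff.2 (hasPartialsAt_arctan_div_grad c j hx).differentiableAt, ?_⟩
  rw [Finset.sum_congr rfl fun j _ => ((hgrad j).pd_eq j).trans
    ((hasPartialsAt_arctan_div_grad c j hx).pd_eq j)]
  set a := α ⬝ᵥ x
  set b := β ⬝ᵥ x
  have key : ∑ j, (β j * a - α j * b) * (a * α j + b * β j)
      = (a ^ 2 - b ^ 2) * (α ⬝ᵥ β) + a * b * (β ⬝ᵥ β - α ⬝ᵥ α) := by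
    simp only [dotProduct, Finset.mul_sum, ← Finset.sum_sub_distrib, ← Finset.sum_add_distrib]
    exact Finset.sum_congr rfl fun j _ => by ring
  calc
    _ = -(2 * c) / (a ^ 2 + b ^ 2) ^ 2 * ∑ j, (β j * a - α j * b) * (a * α j + b * β j) := by
        rw [Finset.mul_sum]
        exact Finset.sum_congr rfl fun j _ => by ring
    _ = 0 := by rw [key, hαβ, hαα]; ring

theorem isHarmonicOn_dilationInvariantPotential {A B : Fin n → ℝ} {η θ δ D : ℝ}
    (hη : B ⬝ᵥ B = η) (hθ : A ⬝ᵥ B = -θ / 2) (hδ : A ⬝ᵥ A = δ) (hD : D = 4 * η * δ - θ ^ 2)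
    (hDpos : 0 < D) (k k₁ : ℝ) :
    IsHarmonicOn (fun y => k₁ + 2 * k / √D *
      Real.arctan ((θ * (B ⬝ᵥ y) + 2 * η * (A ⬝ᵥ y)) / (√D * (B ⬝ᵥ y)))) {y | B ⬝ᵥ y ≠ 0} := by
  have hD2 : √D ^ 2 = 4 * η * δ - θ ^ 2 := by rw [Real.sq_sqrt hDpos.le, hD]
  set α := √D • B
  set β := θ • B + (2 * η) • A
  have hαβ : α ⬝ᵥ β = 0 := by
    simp only [α, β, dotProduct_add, dotProduct_smul, smul_dotProduct, hη, dotProduct_comm B A,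
      hθ, smul_eq_mul]
    ring
  have hαα : α ⬝ᵥ α = β ⬝ᵥ β := by
    simp only [α, β, dotProduct_add, add_dotProduct, dotProduct_smul, smul_dotProduct, hη, hδ,
      dotProduct_comm B A, hθ, smul_eq_mul]
    linear_combination η * hD2
  convert isHarmonicOn_arctan_div hαβ hαα k₁ (2 * k / √D) using 2
  · simp only [α, β, add_dotProduct, smul_dotProduct, smul_eq_mul]
  · simp [α, (Real.sqrt_pos.2 hDpos).ne']

end ArctanOfRatio

theorem dotProduct_ite_lt_ite_lt {n m₁ m₂ : ℕ} (h : m₁ ≤ m₂) (a b : Fin n → ℝ) :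
    (fun i : Fin n => if (i : ℕ) < m₁ then a i else 0) ⬝ᵥ
        (fun i : Fin n => if (i : ℕ) < m₂ then b i else 0)
      = ∑ i : Fin n, if (i : ℕ) < m₁ then a i * b i else 0 := by
  refine Finset.sum_congr rfl fun i _ => ?_
  by_cases hi : (i : ℕ) < m₁
  · simp [hi, hi.trans_le h]
  · simp [hi]

theorem dilation_invariant_MP_solution_general
    (n : ℕ) (hn : 3 ≤ n) (Ω : Set (Fin n → ℝ))
    (m₁ m₂ : ℕ) (hm₁₂ : m₁ ≤ m₂)
    (a b : Fin n → ℝ)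
    (M P : (Fin n → ℝ) → ℝ)
    (hM : M = fun x => ∑ i : Fin n, if (i : ℕ) < m₁ then a i * x i else 0)
    (hP : P = fun x => ∑ j : Fin n, if (j : ℕ) < m₂ then b j * x j else 0)
    (η θ δ : ℝ)
    (hη : η = ∑ j : Fin n, if (j : ℕ) < m₂ then (b j) ^ 2 else 0)
    (hθ : θ = -2 * ∑ i : Fin n, if (i : ℕ) < m₁ then a i * b i else 0)
    (hδ : δ = ∑ i : Fin n, if (i : ℕ) < m₁ then (a i) ^ 2 else 0)
    (D : ℝ) (hD : D = 4 * η * δ - θ ^ 2) (hDpos : 0 < D)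
    (k k₁ : ℝ)
    (u : (Fin n → ℝ) → ℝ)
    (hu : u = fun x => k₁ + (2 * k / Real.sqrt D) *
      Real.arctan ((θ * P x + 2 * η * M x) / (Real.sqrt D * P x)))
    (hΩP : Ω ⊆ {x | P x ≠ 0})
    (hupos : ∀ x ∈ Ω, 0 < u x)
    (N φ ψ : (Fin n → ℝ) → ℝ)
    (hN : N = fun x => 1 / u x)
    (hφ : φ = fun x => N x ^ ((1 : ℝ) / ((n : ℝ) - 2)))
    (hψ : ψ = fun x => Real.sqrt (((n : ℝ) - 1) / (2 * ((n : ℝ) - 2))) * (1 - N x)) :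
    ElectrostaticSystem Ω φ N ψ 0 := by
  set A : Fin n → ℝ := fun i => if (i : ℕ) < m₁ then a i else 0
  set B : Fin n → ℝ := fun i => if (i : ℕ) < m₂ then b i else 0
  have hMA (y : Fin n → ℝ) : M y = A ⬝ᵥ y := by simp [hM, A, dotProduct, ite_mul]
  have hPB (y : Fin n → ℝ) : P y = B ⬝ᵥ y := by simp [hP, B, dotProduct, ite_mul]
  have hBB : B ⬝ᵥ B = η := by simp only [B, dotProduct_ite_lt_ite_lt le_rfl, hη, sq]
  have hAA : A ⬝ᵥ A = δ := by simp only [A, dotProduct_ite_lt_ite_lt le_rfl, hδ, sq]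
  have hAB : A ⬝ᵥ B = -θ / 2 := by rw [dotProduct_ite_lt_ite_lt hm₁₂, hθ]; ring
  have hharm := isHarmonicOn_dilationInvariantPotential hBB hAB hAA hD hDpos k k₁
  simp only [← hMA, ← hPB, ← hu] at hharm
  set V := {y | P y ≠ 0} ∩ u ⁻¹' Set.Ioi 0
  have hV : IsOpen V := by
    refine ContinuousOn.isOpen_inter_preimage
      (fun y hy => (hharm y hy).1.continuousAt.continuousWithinAt) ?_ isOpen_Ioi
    simpa only [hPB] using isOpen_setOf_dotProduct_ne_zero B
  subst hN hφ hψ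
  exact fun x hx => electrostaticSystem_of_isHarmonicOn hn hV (fun y hy => hharm y hy.1)
    (fun y hy => hy.2) x ⟨hΩP hx, hupos x hx⟩

/-- Theorem 1.2 of the paper: the dilation-invariant
Majumdar–Papapetrou solution of the electrovacuum system. -/
theorem dilation_invariant_MP_solution
    (n : ℕ) (hn : 3 ≤ n) (Ω : Set (Fin n → ℝ)) (hΩ : IsOpen Ω)
    (m₁ m₂ : ℕ) (hm₁ : 1 ≤ m₁) (hm₁₂ : m₁ ≤ m₂) (hm₂ : m₂ ≤ n)
    (a b : Fin n → ℝ)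
    (ha : (∑ i : Fin n, if (i : ℕ) < m₁ then a i else 0) ≠ 0)
    (hb : ∀ j : Fin n, (j : ℕ) < m₂ → b j ≠ 0)
    (M P : (Fin n → ℝ) → ℝ)
    (hM : M = fun x => ∑ i : Fin n, if (i : ℕ) < m₁ then a i * x i else 0)
    (hP : P = fun x => ∑ j : Fin n, if (j : ℕ) < m₂ then b j * x j else 0)
    (η θ δ : ℝ)
    (hη : η = ∑ j : Fin n, if (j : ℕ) < m₂ then (b j) ^ 2 else 0)
    (hθ : θ = -2 * ∑ i : Fin n, if (i : ℕ) < m₁ then a i * b i else 0)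
    (hδ : δ = ∑ i : Fin n, if (i : ℕ) < m₁ then (a i) ^ 2 else 0)
    (D : ℝ) (hD : D = 4 * η * δ - θ ^ 2) (hDpos : 0 < D)
    (k k₁ : ℝ) (hk : k ≠ 0)
    (u : (Fin n → ℝ) → ℝ)
    (hu : u = fun x => k₁ + (2 * k / Real.sqrt D) *
      Real.arctan ((θ * P x + 2 * η * M x) / (Real.sqrt D * P x)))
    (hΩP : Ω ⊆ {x | P x ≠ 0})
    (hupos : ∀ x ∈ Ω, 0 < u x)
    (N φ ψ : (Fin n → ℝ) → ℝ)
    (hN : N = fun x => 1 / u x)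
    (hφ : φ = fun x => N x ^ ((1 : ℝ) / ((n : ℝ) - 2)))
    (hψ : ψ = fun x => Real.sqrt (((n : ℝ) - 1) / (2 * ((n : ℝ) - 2))) * (1 - N x)) :
    ElectrostaticSystem Ω φ N ψ 0 :=
  dilation_invariant_MP_solution_general n hn Ω m₁ m₂ hm₁₂ a b M P hM hP η θ δ hη hθ hδ D hD hDpos k
    k₁ u hu hΩP hupos N φ ψ hN hφ hψ
end

section
/- Let n ≥ 3, let Ω ⊆ ℝⁿ be open, let ξ : Ω → ℝ be a smooth function whose Euclidean gradient ∇ξ is nowhere zero on Ω, and let N : ℝ → ℝ be a smooth positive function such that the derivative of t ↦ 1/N(t) is everywhere negative. Assume that for every x ∈ Ω, writing v(t) = 1/N(t), one has −v''(ξ(x))/v'(ξ(x)) = Δξ(x)/|∇ξ(x)|², where Δξ = Σ_{k=1}^n ∂ₖ∂ₖξ and |∇ξ|² = Σ_{k=1}^n (∂ₖξ)². Then, setting Ñ = N∘ξ, φ = Ñ^{1/(n−2)}, and ψ = √((n−1)/(2(n−2)))·(1 − Ñ), the triple (φ, Ñ, ψ) satisfies the electrostatic PDE system with cosmological constant Λ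 = 0 on Ω. -/
open Real Filter Topology
open scoped ContDiff

lemma pd_chain {n : ℕ} (i : Fin n) {ξ : (Fin n → ℝ) → ℝ} {h : ℝ → ℝ}
    {y : Fin n → ℝ} (hξ : DifferentiableAt ℝ ξ y) (hh : DifferentiableAt ℝ h (ξ y)) :
    pd i (fun z => h (ξ z)) y = deriv h (ξ y) * pd i ξ y := by
  have hc : fderiv ℝ (h ∘ ξ) y = (fderiv ℝ h (ξ y)).comp (fderiv ℝ ξ y) :=
    fderiv_comp y hh hξ
  simp only [pd]
  rw [show (fun z => h (ξ z)) = h ∘ ξ from rfl, hc]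
  simp only [ContinuousLinearMap.comp_apply]
  rw [show (fderiv ℝ ξ y) (Pi.single i 1) = ((fderiv ℝ ξ y) (Pi.single i 1)) • (1:ℝ) by simp,
    map_smul]
  simp only [fderiv_apply_one_eq_deriv, smul_eq_mul]
  ring

lemma pd_differentiableAt {n : ℕ} (j : Fin n) {ξ : (Fin n → ℝ) → ℝ}
    {x : Fin n → ℝ} (hξ : ContDiffAt ℝ ∞ ξ x) :
    DifferentiableAt ℝ (pd j ξ) x := by
  have h1 : ContDiffAt ℝ ∞ (fderiv ℝ ξ) x := hξ.fderiv_right (by norm_num)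
  have h2 : ContDiffAt ℝ ∞ (fun y => (fderiv ℝ ξ y) (Pi.single j 1)) x :=
    h1.clm_apply contDiffAt_const
  exact h2.differentiableAt (by norm_num)

lemma pd_pd_chain {n : ℕ} (i j : Fin n) {ξ : (Fin n → ℝ) → ℝ} {h : ℝ → ℝ}
    {Ω : Set (Fin n → ℝ)} (hΩ : IsOpen Ω) (hξ : ContDiffOn ℝ ∞ ξ Ω)
    (hh : ContDiff ℝ ∞ h) {x : Fin n → ℝ} (hx : x ∈ Ω) :
    pd i (pd j (fun z => h (ξ z))) x
      = deriv (deriv h) (ξ x) * (pd i ξ x * pd j ξ x)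
        + deriv h (ξ x) * pd i (pd j ξ) x := by
  have hξx : ContDiffAt ℝ ∞ ξ x := hξ.contDiffAt (hΩ.mem_nhds hx)
  have hev : pd j (fun z => h (ξ z)) =ᶠ[𝓝 x] fun y => deriv h (ξ y) * pd j ξ y := by
    filter_upwards [hΩ.mem_nhds hx] with y hy
    exact pd_chain j ((hξ.contDiffAt (hΩ.mem_nhds hy)).differentiableAt (by norm_num))
      (hh.differentiable (by norm_num) (ξ y))
  have hfd : fderiv ℝ (pd j (fun z => h (ξ z))) x
      = fderiv ℝ (fun y => deriv h (ξ y) * pd j ξ y) x := hev.fderiv_eq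
  have hd1 : DifferentiableAt ℝ (fun y => deriv h (ξ y)) x := by
    have : ContDiff ℝ ∞ (deriv h) := (contDiff_infty_iff_deriv.mp hh).2
    exact (this.differentiable (by norm_num) (ξ x)).comp x
      (hξx.differentiableAt (by norm_num))
  have hd2 : DifferentiableAt ℝ (pd j ξ) x := pd_differentiableAt j hξx
  have hmul : fderiv ℝ (fun y => deriv h (ξ y) * pd j ξ y) x
      = deriv h (ξ x) • fderiv ℝ (pd j ξ) x + pd j ξ x • fderiv ℝ (fun y => deriv h (ξ y)) x :=
    fderiv_mul hd1 hd2
  show fderiv ℝ (pd j (fun z => h (ξ z))) x (Pi.single i 1) = _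
  rw [hfd, hmul]
  simp only [ContinuousLinearMap.add_apply, ContinuousLinearMap.smul_apply, smul_eq_mul]
  have : fderiv ℝ (fun y => deriv h (ξ y)) x (Pi.single i 1)
      = deriv (deriv h) (ξ x) * pd i ξ x := by
    have := pd_chain i (h := deriv h) (hξx.differentiableAt (by norm_num))
      ((contDiff_infty_iff_deriv.mp hh).2.differentiable (by norm_num) (ξ x))
    simpa [pd] using this
  rw [this]
  show _ = _ + deriv h (ξ x) * fderiv ℝ (pd j ξ) x (Pi.single i 1)
  ring


set_option maxHeartbeats 2000000 in
/-- sufficiency direction of Theorem 1.1, item (1): the condition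
`-(d/dξ) log(-(d/dξ)(N⁻¹)) = Δξ/|∇ξ|²` produces a Majumdar–Papapetrou solution. -/
theorem MP_ansatz_sufficiency
    (n : ℕ) (hn : 3 ≤ n) (Ω : Set (Fin n → ℝ)) (hΩ : IsOpen Ω)
    (ξ : (Fin n → ℝ) → ℝ) (hξ : ContDiffOn ℝ (⊤ : ℕ∞) ξ Ω)
    (hgrad : ∀ x ∈ Ω, ∑ k : Fin n, (pd k ξ x) ^ 2 ≠ 0)
    (N : ℝ → ℝ) (hNs : ContDiff ℝ (⊤ : ℕ∞) N) (hNpos : ∀ t : ℝ, 0 < N t)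
    (v : ℝ → ℝ) (hv : v = fun t => 1 / N t)
    (hv' : ∀ t : ℝ, deriv v t < 0)
    (heq : ∀ x ∈ Ω, -(deriv (deriv v) (ξ x)) / deriv v (ξ x)
      = (∑ k : Fin n, pd k (pd k ξ) x) / (∑ k : Fin n, (pd k ξ x) ^ 2))
    (Ntil φ ψ : (Fin n → ℝ) → ℝ)
    (hNtil : Ntil = fun x => N (ξ x))
    (hφ : φ = fun x => Ntil x ^ ((1 : ℝ) / ((n : ℝ) - 2)))
    (hψ : ψ = fun x => Real.sqrt (((n : ℝ) - 1) / (2 * ((n : ℝ) - 2))) * (1 - Ntil x)) :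
    ElectrostaticSystem Ω φ Ntil ψ 0 := by
  subst hNtil hφ hψ hv
  have hN8 : ContDiff ℝ ∞ N := hNs.of_le (by simp)
  have hξ8 : ContDiffOn ℝ ∞ ξ Ω := hξ.of_le (by simp)
  have hNd : Differentiable ℝ N := hN8.differentiable (by norm_num)
  have hdN : ContDiff ℝ ∞ (deriv N) := (contDiff_infty_iff_deriv.mp hN8).2
  have hdNd : Differentiable ℝ (deriv N) := hdN.differentiable (by norm_num)
  have hn3 : (3:ℝ) ≤ (n:ℝ) := by exact_mod_cast hn
  have hn2 : (0:ℝ) < (n:ℝ) - 2 := by linarith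
  have hn1 : (0:ℝ) < (n:ℝ) - 1 := by linarith
  set p : ℝ := (1:ℝ)/((n:ℝ)-2) with hpdef
  set c : ℝ := Real.sqrt (((n : ℝ) - 1) / (2 * ((n : ℝ) - 2))) with hcdef
  have hc2 : c^2 = ((n:ℝ)-1)/(2*((n:ℝ)-2)) := by
    rw [hcdef]; exact Real.sq_sqrt (by positivity)
  -- F and G
  have hF : ContDiff ℝ ∞ (fun t => N t ^ p) := contDiff_iff_contDiffAt.2 fun t =>
    hN8.contDiffAt.rpow_const_of_ne (hNpos t).ne'
  have hdF : deriv (fun t => N t ^ p) = fun t => deriv N t * p * N t ^ (p-1) :=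
    funext fun t => ((hNd t).hasDerivAt.rpow_const (Or.inl (hNpos t).ne')).deriv
  have hG : ContDiff ℝ ∞ (fun t => c * (1 - N t)) :=
    contDiff_const.mul (contDiff_const.sub hN8)
  have hdG : deriv (fun t => c * (1 - N t)) = fun t => -(c * deriv N t) := funext fun t => by
    have h1 : HasDerivAt (fun s => c * (1 - N s)) (-(c * deriv N t)) t := by
      simpa [mul_comm] using ((hNd t).hasDerivAt.const_sub (1:ℝ)).const_mul c
    exact h1.deriv
  intro x hx
  have hξx : ContDiffAt ℝ ∞ ξ x := hξ8.contDiffAt (hΩ.mem_nhds hx)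
  have hξd : DifferentiableAt ℝ ξ x := hξx.differentiableAt (by norm_num)
  have ha : 0 < N (ξ x) := hNpos (ξ x)
  -- second derivative values at ξ x
  have hF2 : deriv (deriv (fun t => N t ^ p)) (ξ x)
      = deriv (deriv N) (ξ x) * p * N (ξ x) ^ (p-1)
        + deriv N (ξ x) * p * (deriv N (ξ x) * (p-1) * N (ξ x) ^ (p-1-1)) := by
    rw [hdF]
    exact (((hdNd (ξ x)).hasDerivAt.mul_const p).mul
      ((hNd (ξ x)).hasDerivAt.rpow_const (Or.inl (hNpos (ξ x)).ne'))).deriv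
  have hG2 : deriv (deriv (fun t => c * (1 - N t))) (ξ x) = -(c * deriv (deriv N) (ξ x)) := by
    rw [hdG]
    exact (((hdNd (ξ x)).hasDerivAt.const_mul c).neg).deriv
  -- rpow reductions
  have hredP : N (ξ x) ^ p = N (ξ x) ^ (p-2) * N (ξ x) * N (ξ x) := by
    conv_lhs => rw [show p = (p-2)+1+1 by ring]
    rw [Real.rpow_add_one ha.ne', Real.rpow_add_one ha.ne']
  have hredQ : N (ξ x) ^ (p-1) = N (ξ x) ^ (p-2) * N (ξ x) := by
    conv_lhs => rw [show p-1 = (p-2)+1 by ring]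
    rw [Real.rpow_add_one ha.ne']
  have hredQ2 : N (ξ x) ^ (p-1-1) = N (ξ x) ^ (p-2) := by rw [show p-1-1 = p-2 by ring]
  -- pd values
  have hNt1 : ∀ k : Fin n, pd k (fun y => N (ξ y)) x = deriv N (ξ x) * pd k ξ x :=
    fun k => pd_chain k hξd (hNd (ξ x))
  have hNt2 : ∀ i j : Fin n, pd i (pd j (fun y => N (ξ y))) x
      = deriv (deriv N) (ξ x) * (pd i ξ x * pd j ξ x) + deriv N (ξ x) * pd i (pd j ξ) x :=
    fun i j => pd_pd_chain i j hΩ hξ8 hN8 hx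
  have hφ1 : ∀ k : Fin n, pd k (fun y => N (ξ y) ^ p) x
      = deriv N (ξ x) * p * (N (ξ x) ^ (p-2) * N (ξ x)) * pd k ξ x := by
    intro k
    have h0 := pd_chain k (h := fun t => N t ^ p) hξd (hF.differentiable (by norm_num) (ξ x))
    rw [hdF] at h0
    rw [← hredQ]
    exact h0
  have hφ2 : ∀ i j : Fin n, pd i (pd j (fun y => N (ξ y) ^ p)) x
      = (deriv (deriv N) (ξ x) * p * (N (ξ x) ^ (p-2) * N (ξ x))
          + deriv N (ξ x) * p * (deriv N (ξ x) * (p-1) * N (ξ x) ^ (p-2)))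
            * (pd i ξ x * pd j ξ x)
        + deriv N (ξ x) * p * (N (ξ x) ^ (p-2) * N (ξ x)) * pd i (pd j ξ) x := by
    intro i j
    have h0 := pd_pd_chain i j (h := fun t => N t ^ p) hΩ hξ8 hF hx
    rw [hF2, hdF] at h0
    rw [← hredQ, ← hredQ2]
    exact h0
  have hψ1 : ∀ k : Fin n, pd k (fun y => c * (1 - N (ξ y))) x
      = -(c * deriv N (ξ x)) * pd k ξ x := by
    intro k
    have h0 := pd_chain k (h := fun t => c * (1 - N t)) hξd
      (hG.differentiable (by norm_num) (ξ x))
    rw [hdG] at h0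
    exact h0
  have hψ2 : ∀ i j : Fin n, pd i (pd j (fun y => c * (1 - N (ξ y)))) x
      = -(c * deriv (deriv N) (ξ x)) * (pd i ξ x * pd j ξ x)
        + -(c * deriv N (ξ x)) * pd i (pd j ξ) x := by
    intro i j
    have h0 := pd_pd_chain i j (h := fun t => c * (1 - N t)) hΩ hξ8 hG hx
    rw [hG2, hdG] at h0
    exact h0
  -- the key identity
  have hs := hgrad x hx
  have hv1 : deriv (fun t => 1/N t) = fun t => -(deriv N t) / (N t)^2 := funext fun t => by
    have h1 : HasDerivAt (fun s => 1 / N s) (-(deriv N t)/(N t)^2) t := by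
      simp only [one_div]
      exact ((hNd t).hasDerivAt.inv (hNpos t).ne')
    exact h1.deriv
  have hb : 0 < deriv N (ξ x) := by
    have h := hv' (ξ x)
    simp only [hv1] at h
    rcases div_neg_iff.mp h with ⟨h1,h2⟩|⟨h1,h2⟩
    · nlinarith [sq_nonneg (N (ξ x))]
    · linarith
  have hw : HasDerivAt (fun t => -(deriv N t) / (N t)^2)
      ((-(deriv (deriv N) (ξ x)) * N (ξ x)^2 - (-(deriv N (ξ x))) * (2 * N (ξ x) ^ 1 * deriv N (ξ x))) / (N (ξ x)^2)^2) (ξ x) := by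
    have := ((hdNd (ξ x)).hasDerivAt.neg).div ((hNd (ξ x)).hasDerivAt.pow 2) (by positivity : N (ξ x)^2 ≠ 0)
    refine this.congr_deriv ?_
    norm_num
  have hsx := heq x hx
  simp only [hv1] at hsx
  rw [hw.deriv] at hsx
  have key0 : N (ξ x) * deriv (deriv N) (ξ x) * (∑ k : Fin n, (pd k ξ x) ^ 2)
      + N (ξ x) * deriv N (ξ x) * (∑ k : Fin n, pd k (pd k ξ) x)
      - 2 * (deriv N (ξ x))^2 * (∑ k : Fin n, (pd k ξ x) ^ 2) = 0 := by
    field_simp at hsx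
    have h9 : N (ξ x)^3 * (N (ξ x) * deriv (deriv N) (ξ x) * (∑ k : Fin n, (pd k ξ x) ^ 2)
        + N (ξ x) * deriv N (ξ x) * (∑ k : Fin n, pd k (pd k ξ) x)
        - 2 * (deriv N (ξ x))^2 * (∑ k : Fin n, (pd k ξ x) ^ 2)) = 0 := by
      linear_combination (-N (ξ x)^3) * hsx
    exact (mul_eq_zero.mp h9).resolve_left (pow_ne_zero 3 ha.ne')
  refine ⟨?_, ?_, ?_, ?_⟩
  · intro i j hij
    have hψpr : pd i (fun y => c * (1 - N (ξ y))) x * pd j (fun y => c * (1 - N (ξ y))) x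
        = ((n:ℝ)-1)/(2*((n:ℝ)-2)) * ((deriv N (ξ x))^2 * (pd i ξ x * pd j ξ x)) := by
      rw [hψ1 i, hψ1 j]
      linear_combination ((deriv N (ξ x))^2 * (pd i ξ x * pd j ξ x)) * hc2
    simp only [hψpr, hφ2, hφ1, hNt1, hNt2, hredP]
    rw [hpdef]
    field_simp
    ring
  · intro i
    have hψsq : ∀ k : Fin n, (pd k (fun y => c * (1 - N (ξ y))) x)^2
        = ((n:ℝ)-1)/(2*((n:ℝ)-2)) * ((deriv N (ξ x))^2 * (pd k ξ x)^2) := by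
      intro k
      rw [hψ1 k]
      linear_combination ((deriv N (ξ x))^2 * (pd k ξ x)^2) * hc2
    rw [show (2*(0:ℝ)/((n:ℝ)-1)) * N (ξ x) = 0 by ring, add_comm, add_eq_zero_iff_eq_neg]
    trans ((1/((n:ℝ)-2)) * (N (ξ x)^(p-2))^2 * (N (ξ x))^3
          * (N (ξ x) * deriv (deriv N) (ξ x) - 2*(deriv N (ξ x))^2) * ∑ k : Fin n, (pd k ξ x)^2)
        + ((1/((n:ℝ)-2)) * (N (ξ x)^(p-2))^2 * (N (ξ x))^4 * deriv N (ξ x)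
          * ∑ k : Fin n, pd k (pd k ξ) x)
    · rw [Finset.mul_sum, Finset.mul_sum, ← Finset.sum_add_distrib]
      refine Finset.sum_congr rfl fun k _ => ?_
      simp only [hψsq, hφ2, hφ1, hNt1, hredP]
      rw [hpdef]
      field_simp
      ring
    · simp only [hψsq, hφ2, hφ1, hNt1, hNt2, hredP]
      rw [hpdef]
      linear_combination (norm := (field_simp; ring))
        ((1/((n:ℝ)-2)) * (N (ξ x)^((1:ℝ)/((n:ℝ)-2)-2))^2 * (N (ξ x))^3) * key0
  · trans ((-(c) * (N (ξ x)^(p-2)) * N (ξ x)^2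
          * (N (ξ x) * deriv (deriv N) (ξ x) - 2*(deriv N (ξ x))^2) * ∑ k : Fin n, (pd k ξ x)^2)
        + (-(c) * (N (ξ x)^(p-2)) * N (ξ x)^3 * deriv N (ξ x) * ∑ k : Fin n, pd k (pd k ξ) x))
    · rw [Finset.mul_sum, Finset.mul_sum, ← Finset.sum_add_distrib]
      refine Finset.sum_congr rfl fun k _ => ?_
      simp only [hψ2, hψ1, hφ1, hNt1, hredP]
      rw [hpdef]
      field_simp
      ring
    · linear_combination (-(c) * (N (ξ x)^(p-2)) * N (ξ x)^2) * key0
  · have hψsq : ∀ k : Fin n, (pd k (fun y => c * (1 - N (ξ y))) x)^2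
        = ((n:ℝ)-1)/(2*((n:ℝ)-2)) * ((deriv N (ξ x))^2 * (pd k ξ x)^2) := by
      intro k
      rw [hψ1 k]
      linear_combination ((deriv N (ξ x))^2 * (pd k ξ x)^2) * hc2
    trans (((N (ξ x)^(p-2))^2 * N (ξ x)^4
          * (N (ξ x) * deriv (deriv N) (ξ x) - 2*(deriv N (ξ x))^2) * ∑ k : Fin n, (pd k ξ x)^2)
        + ((N (ξ x)^(p-2))^2 * N (ξ x)^5 * deriv N (ξ x) * ∑ k : Fin n, pd k (pd k ξ) x))
    · rw [Finset.mul_sum, Finset.mul_sum, ← Finset.sum_add_distrib]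
      refine Finset.sum_congr rfl fun k _ => ?_
      simp only [hψsq, hφ1, hNt1, hNt2, hredP]
      rw [hpdef]
      field_simp
      ring
    · linear_combination ((N (ξ x)^(p-2))^2 * N (ξ x)^4) * key0
end

section
/- Let n ≥ 3, let Ω ⊆ ℝⁿ be open, and let u : Ω → ℝ be a smooth positive harmonic function, i.e., Σ_{k=1}^{n} ∂ₖ∂ₖu = 0 on Ω. Set N = 1/u, φ = N^{1/(n−2)}, and ψ = √((n−1)/(2(n−2)))·(1 − N). Then the triple (φ, N, ψ) satisfies the electrostatic PDE system with cosmological constant Λ = 0 on Ω. -/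
open Real Filter Topology

lemma contDiffAt_pd {n : ℕ} (i : Fin n) {u : (Fin n → ℝ) → ℝ} {x : Fin n → ℝ}
    (hu : ContDiffAt ℝ (⊤ : ℕ∞) u x) : ContDiffAt ℝ (⊤ : ℕ∞) (pd i u) x := by
  have h1 : ContDiffAt ℝ (⊤ : ℕ∞) (fderiv ℝ u) x := hu.fderiv_right (by simp)
  exact h1.clm_apply contDiffAt_const

lemma pd_comp_pt {n : ℕ} (i : Fin n) {u : (Fin n → ℝ) → ℝ} {h : ℝ → ℝ} {h' : ℝ}
    {x : Fin n → ℝ} (hu : DifferentiableAt ℝ u x) (hh : HasDerivAt h h' (u x)) :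
    pd i (fun y => h (u y)) x = h' * pd i u x := by
  have H := hh.comp_hasFDerivAt x hu.hasFDerivAt
  show fderiv ℝ (fun y => h (u y)) x (Pi.single i 1) = _
  rw [show (fun y => h (u y)) = h ∘ u from rfl, H.fderiv]
  simp [pd]

lemma pd_comp_on {n : ℕ} {U : Set (Fin n → ℝ)} (hU : IsOpen U)
    {u F : (Fin n → ℝ) → ℝ} (hus : ContDiffOn ℝ (⊤ : ℕ∞) u U)
    {h h' h'' : ℝ → ℝ}
    (hF : ∀ y ∈ U, F y = h (u y))
    (hd1 : ∀ y ∈ U, HasDerivAt h (h' (u y)) (u y))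
    (hd2 : ∀ y ∈ U, HasDerivAt h' (h'' (u y)) (u y))
    {x : Fin n → ℝ} (hx : x ∈ U) (i j : Fin n) :
    pd i F x = h' (u x) * pd i u x ∧
    pd i (pd j F) x = h'' (u x) * pd i u x * pd j u x
      + h' (u x) * pd i (pd j u) x := by
  have hdiff : ∀ y ∈ U, DifferentiableAt ℝ u y := fun y hy =>
    (hus.contDiffAt (hU.mem_nhds hy)).differentiableAt (by simp)
  have hFc : ∀ (k : Fin n), ∀ y ∈ U, pd k F y = h' (u y) * pd k u y := by
    intro k y hy
    have hev : F =ᶠ[nhds y] fun z => h (u z) := by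
      filter_upwards [hU.mem_nhds hy] with z hz using hF z hz
    have : pd k F y = pd k (fun z => h (u z)) y := by
      show fderiv ℝ F y _ = fderiv ℝ _ y _
      rw [hev.fderiv_eq]
    rw [this, pd_comp_pt k (hdiff y hy) (hd1 y hy)]
  refine ⟨hFc i x hx, ?_⟩
  have hev2 : pd j F =ᶠ[nhds x] fun y => h' (u y) * pd j u y := by
    filter_upwards [hU.mem_nhds hx] with y hy using hFc j y hy
  have hstep : pd i (pd j F) x = pd i (fun y => h' (u y) * pd j u y) x := by
    show fderiv ℝ (pd j F) x _ = fderiv ℝ _ x _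
    rw [hev2.fderiv_eq]
  rw [hstep]
  have hd2' : DifferentiableAt ℝ (fun y => h' (u y)) x :=
    ((hd2 x hx).comp_hasFDerivAt x (hdiff x hx).hasFDerivAt).differentiableAt
  have hpdj : DifferentiableAt ℝ (pd j u) x :=
    (contDiffAt_pd j (hus.contDiffAt (hU.mem_nhds hx))).differentiableAt (by simp)
  show fderiv ℝ (fun y => h' (u y) * pd j u y) x (Pi.single i 1) = _
  rw [fderiv_fun_mul hd2' hpdj]
  have h1 : fderiv ℝ (fun y => h' (u y)) x =
      h'' (u x) • fderiv ℝ u x := by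
    rw [show (fun y => h' (u y)) = h' ∘ u from rfl,
      ((hd2 x hx).comp_hasFDerivAt x (hdiff x hx).hasFDerivAt).fderiv]
  simp only [ContinuousLinearMap.add_apply, ContinuousLinearMap.smul_apply, h1,
    smul_eq_mul]
  show h' (u x) * pd i (pd j u) x + pd j u x * (h'' (u x) * pd i u x) = _
  ring

set_option maxHeartbeats 1000000 in
/-- the Majumdar–Papapetrou ansatz with `N⁻¹` a positive harmonic
function solves the electrostatic PDE system with `Λ = 0`. -/
theorem MP_harmonic_solution
    (n : ℕ) (hn : 3 ≤ n) (Ω : Set (Fin n → ℝ)) (hΩ : IsOpen Ω)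
    (u : (Fin n → ℝ) → ℝ) (hus : ContDiffOn ℝ (⊤ : ℕ∞) u Ω)
    (hupos : ∀ x ∈ Ω, 0 < u x)
    (huharm : ∀ x ∈ Ω, ∑ k : Fin n, pd k (pd k u) x = 0)
    (N φ ψ : (Fin n → ℝ) → ℝ)
    (hN : N = fun x => 1 / u x)
    (hφ : φ = fun x => N x ^ ((1 : ℝ) / ((n : ℝ) - 2)))
    (hψ : ψ = fun x => Real.sqrt (((n : ℝ) - 1) / (2 * ((n : ℝ) - 2))) * (1 - N x)) :
    ElectrostaticSystem Ω φ N ψ 0 := by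
  have hn' : (3 : ℝ) ≤ (n : ℝ) := by exact_mod_cast hn
  have hm0 : ((n : ℝ) - 2) ≠ 0 := by linarith
  have hn1 : ((n : ℝ) - 1) ≠ 0 := by linarith
  obtain ⟨α, hα⟩ : ∃ a : ℝ, a = (1 : ℝ) / ((n : ℝ) - 2) := ⟨_, rfl⟩
  rw [← hα] at hφ
  set c : ℝ := Real.sqrt (((n : ℝ) - 1) / (2 * ((n : ℝ) - 2))) with hc
  have hαpos : 0 < α := by rw [hα]; exact div_pos one_pos (by linarith)
  have hα0 : α ≠ 0 := hαpos.ne'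
  have hα1 : α + 1 ≠ 0 := by linarith
  have h1α : 1 / α + 1 ≠ 0 := by
    have := one_div_pos.mpr hαpos; linarith
  have hsub2 : ((n : ℝ) - 2) = 1 / α := by rw [hα]; field_simp
  have hsub1 : ((n : ℝ) - 1) = 1 / α + 1 := by rw [hα]; field_simp; ring
  have hc2 : c ^ 2 = ((n : ℝ) - 1) / (2 * ((n : ℝ) - 2)) := by
    rw [hc]
    exact Real.sq_sqrt (div_nonneg (by linarith) (by linarith))
  have hune : ∀ y ∈ Ω, u y ≠ 0 := fun y hy => (hupos y hy).ne'
  -- composite descriptions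
  have hFN : ∀ y ∈ Ω, N y = (fun t : ℝ => t⁻¹) (u y) := by
    intro y _; rw [hN]; exact one_div _
  have hd1N : ∀ y ∈ Ω, HasDerivAt (fun t : ℝ => t⁻¹)
      ((fun t : ℝ => -(t ^ 2)⁻¹) (u y)) (u y) := fun y hy => hasDerivAt_inv (hune y hy)
  have hd2N : ∀ y ∈ Ω, HasDerivAt (fun t : ℝ => -(t ^ 2)⁻¹)
      ((fun t : ℝ => 2 / t ^ 3) (u y)) (u y) := by
    intro y hy
    have H := ((hasDerivAt_pow 2 (u y)).inv (pow_ne_zero 2 (hune y hy))).neg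
    refine H.congr_deriv ?_
    field_simp [hune y hy]
    ring
  have hFφ : ∀ y ∈ Ω, φ y = (fun t : ℝ => t ^ (-α)) (u y) := by
    intro y hy
    rw [hφ]
    show N y ^ α = (u y) ^ (-α)
    rw [hN]
    show (1 / u y) ^ α = (u y) ^ (-α)
    rw [one_div, Real.inv_rpow (hupos y hy).le, ← Real.rpow_neg (hupos y hy).le]
  have hd1φ : ∀ y ∈ Ω, HasDerivAt (fun t : ℝ => t ^ (-α))
      ((fun t : ℝ => -α * t ^ (-α - 1)) (u y)) (u y) := fun y hy =>
    Real.hasDerivAt_rpow_const (Or.inl (hune y hy))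
  have hd2φ : ∀ y ∈ Ω, HasDerivAt (fun t : ℝ => -α * t ^ (-α - 1))
      ((fun t : ℝ => α * (α + 1) * t ^ (-α - 2)) (u y)) (u y) := by
    intro y hy
    have H := (Real.hasDerivAt_rpow_const (p := -α - 1) (Or.inl (hune y hy))).const_mul (-α)
    refine H.congr_deriv ?_
    rw [show (-α - 1 - 1 : ℝ) = -α - 2 by ring]
    ring
  have hFψ : ∀ y ∈ Ω, ψ y = (fun t : ℝ => c * (1 - t⁻¹)) (u y) := by
    intro y _; rw [hψ, hN]; show c * (1 - 1 / u y) = c * (1 - (u y)⁻¹); rw [one_div]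
  have hd1ψ : ∀ y ∈ Ω, HasDerivAt (fun t : ℝ => c * (1 - t⁻¹))
      ((fun t : ℝ => c * (t ^ 2)⁻¹) (u y)) (u y) := by
    intro y hy
    have H := ((hasDerivAt_inv (hune y hy)).const_sub 1).const_mul c
    refine H.congr_deriv ?_
    ring
  have hd2ψ : ∀ y ∈ Ω, HasDerivAt (fun t : ℝ => c * (t ^ 2)⁻¹)
      ((fun t : ℝ => -2 * c / t ^ 3) (u y)) (u y) := by
    intro y hy
    have H := ((hasDerivAt_pow 2 (u y)).inv (pow_ne_zero 2 (hune y hy))).const_mul c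
    refine H.congr_deriv ?_
    field_simp [hune y hy]
    ring
  intro x hx
  have PN := fun i j : Fin n => pd_comp_on (h := fun t : ℝ => t⁻¹)
      (h' := fun t : ℝ => -(t ^ 2)⁻¹) (h'' := fun t : ℝ => 2 / t ^ 3)
      hΩ hus hFN hd1N hd2N hx i j
  have Pφ := fun i j : Fin n => pd_comp_on (h := fun t : ℝ => t ^ (-α))
      (h' := fun t : ℝ => -α * t ^ (-α - 1)) (h'' := fun t : ℝ => α * (α + 1) * t ^ (-α - 2))
      hΩ hus hFφ hd1φ hd2φ hx i j
  have Pψ := fun i j : Fin n => pd_comp_on (h := fun t : ℝ => c * (1 - t⁻¹))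
      (h' := fun t : ℝ => c * (t ^ 2)⁻¹) (h'' := fun t : ℝ => -2 * c / t ^ 3)
      hΩ hus hFψ hd1ψ hd2ψ hx i j
  have ht0 : 0 < u x := hupos x hx
  have htne : u x ≠ 0 := ht0.ne'
  have hA0 : (0:ℝ) < u x ^ (-α) := Real.rpow_pos_of_pos ht0 _
  have hA1 : u x ^ (-α - 1) = u x ^ (-α) / u x := by
    rw [Real.rpow_sub ht0, Real.rpow_one]
  have hA2 : u x ^ (-α - 2) = u x ^ (-α) / u x / u x := by
    rw [show (-α - 2 : ℝ) = -α - 1 - 1 by ring, Real.rpow_sub ht0, Real.rpow_one, hA1]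
  have hNx : N x = (u x)⁻¹ := hFN x hx
  have hφx : φ x = u x ^ (-α) := hFφ x hx
  have hψψ : ∀ i j : Fin n, pd i ψ x * pd j ψ x =
      (((n:ℝ)-1)/(2*((n:ℝ)-2))) * (pd i u x * pd j u x) / (u x)^4 := by
    intro i j
    rw [(Pψ i i).1, (Pψ j j).1, ← hc2]
    ring
  have hψsq : ∀ k : Fin n, (pd k ψ x) ^ 2 =
      (((n:ℝ)-1)/(2*((n:ℝ)-2))) * (pd k u x)^2 / (u x)^4 := by
    intro k
    rw [(Pψ k k).1, ← hc2]
    ring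
  refine ⟨?_, ?_, ?_, ?_⟩
  · -- equation (i)
    intro i j _
    rw [(Pφ i j).2, (PN i j).2, (Pφ i i).1, (PN j j).1, (Pφ j j).1, (PN i i).1,
      hψψ i j, hNx, hφx]
    rw [hA1, hA2, hsub1, hsub2]
    field_simp [htne, hα0, hα1, h1α, hA0.ne']
    ring
  · -- equation (ii)
    intro i
    have hB : ((n : ℝ) - 2) * N x * pd i (pd i φ) x - φ x * pd i (pd i N) x
          - 2 * pd i φ x * pd i N x + (2 * φ x / N x) * (pd i ψ x) ^ 2 = 0 := by
      rw [(Pφ i i).2, (PN i i).2, (Pφ i i).1, (PN i i).1, hψsq i, hNx, hφx]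
      rw [hA1, hA2, hsub1, hsub2]
      field_simp [htne, hα0, hα1, h1α, hA0.ne']
      ring
    rw [hB, mul_zero, zero_add]
    have key : ∀ k : Fin n, φ x * N x * pd k (pd k φ) x + φ x * pd k φ x * pd k N x
          - ((n : ℝ) - 1) * N x * (pd k φ x) ^ 2
          - (2 / (((n : ℝ) - 1) * N x)) * (φ x) ^ 2 * (pd k ψ x) ^ 2
        = (-α * (u x ^ (-α))^2 / (u x)^2) * pd k (pd k u) x := by
      intro k
      rw [(Pφ k k).2, (PN k k).1, (Pφ k k).1, hψsq k, hNx, hφx]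
      rw [hA1, hA2, hsub1, hsub2]
      field_simp [htne, hα0, hα1, h1α, hA0.ne']
      ring
    rw [Finset.sum_congr rfl (fun k _ => key k), ← Finset.mul_sum, huharm x hx,
      mul_zero]
    norm_num
  · -- equation (iii)
    have key : ∀ k : Fin n, N x * φ x * pd k (pd k ψ) x
        - ((n : ℝ) - 2) * N x * pd k φ x * pd k ψ x
        - φ x * pd k ψ x * pd k N x
        = (u x ^ (-α) * c / (u x)^3) * pd k (pd k u) x := by
      intro k
      rw [(Pψ k k).2, (Pφ k k).1, (Pψ k k).1, (PN k k).1, hNx, hφx]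
      rw [hA1, hsub2]
      field_simp [htne, hα0, hα1, h1α, hA0.ne']
      ring
    rw [Finset.sum_congr rfl (fun k _ => key k), ← Finset.mul_sum, huharm x hx,
      mul_zero]
  · -- equation (iv)
    have key : ∀ k : Fin n, (φ x) ^ 2 * N x * pd k (pd k N) x
        - ((n : ℝ) - 2) * φ x * pd k φ x * N x * pd k N x
        - (2 * ((n : ℝ) - 2) / ((n : ℝ) - 1)) * (φ x) ^ 2 * (pd k ψ x) ^ 2
        = (-((u x ^ (-α))^2) / (u x)^3) * pd k (pd k u) x := by
      intro k
      rw [(PN k k).2, (Pφ k k).1, (PN k k).1, hψsq k, hNx, hφx]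
      rw [hA1, hsub1, hsub2]
      field_simp [htne, hα0, hα1, h1α, hA0.ne']
      ring
    rw [Finset.sum_congr rfl (fun k _ => key k), ← Finset.mul_sum, huharm x hx,
      mul_zero]
    norm_num
end

section
/- Let n ≥ 3 and let φ, N, ψ : I → ℝ be smooth functions on an open interval I with φ > 0 and N > 0, satisfying on I the two identities (n−2)φ'N − φN' = 0 and (n−2)φ''N − φN'' − 2φ'N' + (2φ/N)(ψ')² = 0. Then on I one has φ'/φ = N'/((n−2)N) and (ψ')² = ((n−1)/(2(n−2)))(N')². -/
/-- equation (3.3) of the paper: derivation of the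
Majumdar–Papapetrou relations between `φ`, `N` and `ψ`. -/
theorem MP_relations
    (n : ℕ) (hn : 3 ≤ n) (α β : ℝ) (φ N ψ : ℝ → ℝ)
    (hφs : ContDiffOn ℝ (⊤ : ℕ∞) φ (Set.Ioo α β))
    (hNs : ContDiffOn ℝ (⊤ : ℕ∞) N (Set.Ioo α β))
    (hψs : ContDiffOn ℝ (⊤ : ℕ∞) ψ (Set.Ioo α β))
    (hφpos : ∀ t ∈ Set.Ioo α β, 0 < φ t)
    (hNpos : ∀ t ∈ Set.Ioo α β, 0 < N t)
    (h1 : ∀ t ∈ Set.Ioo α β,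
      ((n : ℝ) - 2) * deriv φ t * N t - φ t * deriv N t = 0)
    (h2 : ∀ t ∈ Set.Ioo α β,
      ((n : ℝ) - 2) * deriv (deriv φ) t * N t - φ t * deriv (deriv N) t
        - 2 * deriv φ t * deriv N t + (2 * φ t / N t) * (deriv ψ t) ^ 2 = 0) :
    ∀ t ∈ Set.Ioo α β,
      deriv φ t / φ t = deriv N t / (((n : ℝ) - 2) * N t) ∧
      (deriv ψ t) ^ 2 = (((n : ℝ) - 1) / (2 * ((n : ℝ) - 2))) * (deriv N t) ^ 2 := by
  have hopen : IsOpen (Set.Ioo α β) := isOpen_Ioo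
  have hn2 : (2:ℝ) < (n:ℝ) := by exact_mod_cast Nat.lt_of_lt_of_le (by norm_num) hn
  have hn2' : ((n:ℝ) - 2) ≠ 0 := by linarith
  intro t ht
  have hφt := (hφpos t ht).ne'
  have hNt := (hNpos t ht).ne'
  -- differentiability facts
  have hφd : ContDiffOn ℝ (⊤ : ℕ∞) (deriv φ) (Set.Ioo α β) := hφs.deriv_of_isOpen hopen (by simp)
  have hNd : ContDiffOn ℝ (⊤ : ℕ∞) (deriv N) (Set.Ioo α β) := hNs.deriv_of_isOpen hopen (by simp)
  have dφ : DifferentiableAt ℝ φ t :=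
    (hφs.differentiableOn (by norm_num)).differentiableAt (hopen.mem_nhds ht)
  have dN : DifferentiableAt ℝ N t :=
    (hNs.differentiableOn (by norm_num)).differentiableAt (hopen.mem_nhds ht)
  have dφ' : DifferentiableAt ℝ (deriv φ) t :=
    (hφd.differentiableOn (by norm_num)).differentiableAt (hopen.mem_nhds ht)
  have dN' : DifferentiableAt ℝ (deriv N) t :=
    (hNd.differentiableOn (by norm_num)).differentiableAt (hopen.mem_nhds ht)
  -- derivative of the first identity
  have hg : HasDerivAt (fun s => ((n : ℝ) - 2) * deriv φ s * N s - φ s * deriv N s)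
      (((n : ℝ) - 2) * (deriv (deriv φ) t * N t + deriv φ t * deriv N t)
        - (deriv φ t * deriv N t + φ t * deriv (deriv N) t)) t := by
    have h₁ : HasDerivAt (fun s => ((n : ℝ) - 2) * deriv φ s * N s)
        (((n : ℝ) - 2) * (deriv (deriv φ) t * N t + deriv φ t * deriv N t)) t := by
      have := ((dφ'.hasDerivAt.const_mul ((n:ℝ) - 2)).mul dN.hasDerivAt)
      exact this.congr_deriv (by ring)
    have h₂ : HasDerivAt (fun s => φ s * deriv N s)
        (deriv φ t * deriv N t + φ t * deriv (deriv N) t) t :=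
      (dφ.hasDerivAt.mul dN'.hasDerivAt)
    exact h₁.sub h₂
  have E3 : ((n : ℝ) - 2) * (deriv (deriv φ) t * N t + deriv φ t * deriv N t)
        - (deriv φ t * deriv N t + φ t * deriv (deriv N) t) = 0 := by
    have heq : (fun s => ((n : ℝ) - 2) * deriv φ s * N s - φ s * deriv N s)
        =ᶠ[nhds t] (fun _ => (0:ℝ)) := by
      filter_upwards [hopen.mem_nhds ht] with s hs using h1 s hs
    have := hg.deriv
    rw [Filter.EventuallyEq.deriv_eq heq] at this
    simp at this
    linarith [this]
  have E1 := h1 t ht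
  have E2 := h2 t ht
  constructor
  · rw [div_eq_div_iff hφt (by positivity)]
    ring_nf
    nlinarith [E1]
  · have E2' : ((n : ℝ) - 2) * deriv (deriv φ) t * N t * N t
        - φ t * deriv (deriv N) t * N t
        - 2 * deriv φ t * deriv N t * N t + 2 * φ t * (deriv ψ t) ^ 2 = 0 := by
      have := mul_eq_zero_of_left E2 (N t)
      field_simp at this ⊢
      linarith [this]
    rw [div_mul_eq_mul_div, eq_div_iff (by positivity : (2:ℝ) * ((n:ℝ)-2) ≠ 0)]
    have key : (φ t * N t) * ((deriv ψ t)^2 * (2*((n:ℝ)-2)))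
        = (φ t * N t) * (((n:ℝ)-1) * (deriv N t)^2) := by
      linear_combination (((n:ℝ)-2) * N t) * E2' - (((n:ℝ)-2) * N t * N t) * E3
        + (((n:ℝ)-1) * deriv N t * N t) * E1
    exact mul_left_cancel₀ (mul_ne_zero hφt hNt) key
end

section
/- Let n ≥ 3, let φ, N, ψ : I → ℝ be smooth functions on an open interval I with φ > 0, N > 0, and N' nowhere zero on I, satisfying on I the identities (n−2)φ'N = φN' and (ψ')² = ((n−1)/(2(n−2)))(N')². Then for every t ∈ I and all real numbers a > 0 and b, the equation [φφ''N + φφ'N' − (n−1)(φ')²N − (2/((n−1)N))φ²(ψ')²]·a + φφ'N·b = 0 holds at t if and only if [N''/N' − 2N'/N]·a + b = 0 holds at t. -/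
/-- equivalence of the first reduced ODE (1) with the single
equation `N''/N' − 2N'/N = −Δξ/|∇ξ|²` (with `a = |∇ξ|² > 0`, `b = Δξ`). -/
theorem reduced_ode_one_equiv
    (n : ℕ) (hn : 3 ≤ n) (α β : ℝ) (φ N ψ : ℝ → ℝ)
    (hφs : ContDiffOn ℝ (⊤ : ℕ∞) φ (Set.Ioo α β))
    (hNs : ContDiffOn ℝ (⊤ : ℕ∞) N (Set.Ioo α β))
    (hψs : ContDiffOn ℝ (⊤ : ℕ∞) ψ (Set.Ioo α β))
    (hφpos : ∀ t ∈ Set.Ioo α β, 0 < φ t)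
    (hNpos : ∀ t ∈ Set.Ioo α β, 0 < N t)
    (hN' : ∀ t ∈ Set.Ioo α β, deriv N t ≠ 0)
    (h1 : ∀ t ∈ Set.Ioo α β, ((n : ℝ) - 2) * deriv φ t * N t = φ t * deriv N t)
    (h2 : ∀ t ∈ Set.Ioo α β,
      (deriv ψ t) ^ 2 = (((n : ℝ) - 1) / (2 * ((n : ℝ) - 2))) * (deriv N t) ^ 2) :
    ∀ t ∈ Set.Ioo α β, ∀ a b : ℝ, 0 < a →
      ((φ t * deriv (deriv φ) t * N t + φ t * deriv φ t * deriv N t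
          - ((n : ℝ) - 1) * (deriv φ t) ^ 2 * N t
          - (2 / (((n : ℝ) - 1) * N t)) * (φ t) ^ 2 * (deriv ψ t) ^ 2) * a
        + φ t * deriv φ t * N t * b = 0
      ↔ (deriv (deriv N) t / deriv N t - 2 * deriv N t / N t) * a + b = 0) := by
  intro t ht a b ha
  have hmem : Set.Ioo α β ∈ nhds t := isOpen_Ioo.mem_nhds ht
  have hφd : ContDiffOn ℝ (⊤ : ℕ∞) (deriv φ) (Set.Ioo α β) :=
    hφs.deriv_of_isOpen isOpen_Ioo (by simp)
  have hNd : ContDiffOn ℝ (⊤ : ℕ∞) (deriv N) (Set.Ioo α β) :=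
    hNs.deriv_of_isOpen isOpen_Ioo (by simp)
  have dφ : DifferentiableAt ℝ φ t :=
    (hφs.differentiableOn (by simp)).differentiableAt hmem
  have dN : DifferentiableAt ℝ N t :=
    (hNs.differentiableOn (by simp)).differentiableAt hmem
  have dφ' : DifferentiableAt ℝ (deriv φ) t :=
    (hφd.differentiableOn (by simp)).differentiableAt hmem
  have dN' : DifferentiableAt ℝ (deriv N) t :=
    (hNd.differentiableOn (by simp)).differentiableAt hmem
  -- differentiate the identity h1
  have hev : (fun x => ((n : ℝ) - 2) * deriv φ x * N x) =ᶠ[nhds t]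
      fun x => φ x * deriv N x := Filter.eventuallyEq_of_mem hmem h1
  have hL : HasDerivAt (fun x => ((n : ℝ) - 2) * deriv φ x * N x)
      (((n : ℝ) - 2) * deriv (deriv φ) t * N t
        + ((n : ℝ) - 2) * deriv φ t * deriv N t) t := by
    have := (dφ'.hasDerivAt.const_mul ((n : ℝ) - 2)).mul dN.hasDerivAt
    exact this
  have hR : HasDerivAt (fun x => φ x * deriv N x)
      (deriv φ t * deriv N t + φ t * deriv (deriv N) t) t :=
    dφ.hasDerivAt.mul dN'.hasDerivAt
  have E2 : ((n : ℝ) - 2) * deriv (deriv φ) t * N t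
      + ((n : ℝ) - 2) * deriv φ t * deriv N t
      = deriv φ t * deriv N t + φ t * deriv (deriv N) t := by
    rw [← hL.deriv, ← hR.deriv]
    exact hev.deriv_eq
  have E1 := h1 t ht
  have E3 := h2 t ht
  have hNt : N t ≠ 0 := (hNpos t ht).ne'
  have hN't : deriv N t ≠ 0 := hN' t ht
  have hφt : φ t ≠ 0 := (hφpos t ht).ne'
  have hn2 : ((n : ℝ) - 2) ≠ 0 := by
    have : (3 : ℝ) ≤ (n : ℝ) := by exact_mod_cast hn
    linarith
  have hn1 : ((n : ℝ) - 1) ≠ 0 := by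
    have : (3 : ℝ) ≤ (n : ℝ) := by exact_mod_cast hn
    linarith
  have E3' : 2 * ((n : ℝ) - 2) * (deriv ψ t) ^ 2 = ((n : ℝ) - 1) * (deriv N t) ^ 2 := by
    rw [E3]; field_simp
  have key : (φ t * deriv (deriv φ) t * N t + φ t * deriv φ t * deriv N t
          - ((n : ℝ) - 1) * (deriv φ t) ^ 2 * N t
          - (2 / (((n : ℝ) - 1) * N t)) * (φ t) ^ 2 * (deriv ψ t) ^ 2) * a
        + φ t * deriv φ t * N t * b
      = ((φ t) ^ 2 * deriv N t / ((n : ℝ) - 2))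
        * ((deriv (deriv N) t / deriv N t - 2 * deriv N t / N t) * a + b) := by
    field_simp
    linear_combination (a * ((n : ℝ) - 1) * N t * φ t) * E2
      - (a * (φ t) ^ 2) * E3'
      + (-a * ((n : ℝ) - 1) ^ 2 * N t * deriv φ t - a * ((n : ℝ) - 1) * φ t * deriv N t
          + b * ((n : ℝ) - 1) * φ t * N t) * E1
  have hmul : (φ t) ^ 2 * deriv N t / ((n : ℝ) - 2) ≠ 0 := by
    apply div_ne_zero (mul_ne_zero (pow_ne_zero 2 hφt) hN't) hn2
  rw [key]
  constructor
  · intro h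
    rcases mul_eq_zero.mp h with h' | h'
    · exact absurd h' hmul
    · exact h'
  · intro h
    rw [h, mul_zero]
end

section
/- Let n ≥ 1, fix integers 1 ≤ m₁ ≤ m₂ ≤ n and real constants a₁,…,a_{m₁}, b₁,…,b_{m₂}. Set M(x) = Σ_{i=1}^{m₁} aᵢxᵢ, P(x) = Σ_{j=1}^{m₂} bⱼxⱼ, ξ(x) = M(x)/P(x) on {x ∈ ℝⁿ : P(x) ≠ 0}, η = Σ_{j=1}^{m₂} bⱼ², θ = −2Σ_{i=1}^{m₁} aᵢbᵢ, δ = Σ_{i=1}^{m₁} aᵢ², and Q(t) = ηt² + θt + δ. Then for every x with P(x) ≠ 0, Q(ξ(x)) · Σ_{k=1}^{n} ∂ₖ∂ₖξ(x) = (Σ_{k=1}^{n} (∂ₖξ(x))²) · Q'(ξ(x)), where Q'(t) = 2ηt + θ. -/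
open ContinuousLinearMap

theorem HasFDerivAt.div {𝕜 E : Type*} [NontriviallyNormedField 𝕜] [NormedAddCommGroup E]
    [NormedSpace 𝕜 E] {f g : E → 𝕜} {f' g' : E →L[𝕜] 𝕜} {x : E}
    (hf : HasFDerivAt f f' x) (hg : HasFDerivAt g g' x) (hx : g x ≠ 0) :
    HasFDerivAt (fun y => f y / g y) ((g x ^ 2)⁻¹ • (g x • f' - f x • g')) x := by
  simp only [div_eq_mul_inv]
  refine (hf.mul ((hasFDerivAt_inv hx).comp x hg)).congr_fderiv ?_
  ext v
  simp only [Function.comp_apply, add_apply, smul_apply, comp_apply, toSpanSingleton_apply,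
    smul_eq_mul, mul_neg, sub_apply]
  field_simp
  ring

namespace ContinuousLinearMap

variable {𝕜 E : Type*} [NontriviallyNormedField 𝕜] [NormedAddCommGroup E] [NormedSpace 𝕜 E]
  (f g : E →L[𝕜] 𝕜) {x : E}

theorem fderiv_div_apply (hx : g x ≠ 0) (v : E) :
    fderiv 𝕜 (fun y => f y / g y) x v = (f v * g x - g v * f x) / g x ^ 2 := by
  rw [(f.hasFDerivAt.div g.hasFDerivAt hx).fderiv]
  simp only [smul_apply, sub_apply, smul_eq_mul]
  ring

theorem fderiv_fderiv_div_apply (hx : g x ≠ 0) (v : E) :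
    fderiv 𝕜 (fun y => fderiv 𝕜 (fun z => f z / g z) y v) x v
      = -2 * g v * (f v * g x - g v * f x) / g x ^ 3 := by
  have hev : (fun y => fderiv 𝕜 (fun z => f z / g z) y v)
      =ᶠ[nhds x] fun y => (f v • g - g v • f) y / g y ^ 2 := by
    filter_upwards [g.continuous.continuousAt.eventually_ne hx] with y hy
    rw [fderiv_div_apply f g hy]
    simp
  have hsq : HasFDerivAt (fun y => g y ^ 2) ((2 * g x) • g) x := by
    simpa using g.hasFDerivAt.pow 2
  rw [hev.fderiv_eq, ((f v • g - g v • f).hasFDerivAt.div hsq (pow_ne_zero 2 hx)).fderiv]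
  simp only [sub_apply, smul_apply, smul_eq_mul, neg_mul]
  field_simp
  ring

end ContinuousLinearMap

section DilationInvariant

variable {E ι : Type*} [NormedAddCommGroup E] [NormedSpace ℝ E] [Fintype ι]
  (f g : E →L[ℝ] ℝ) (e : ι → E) {x : E}

theorem sum_sq_fderiv_div_apply (hx : g x ≠ 0) :
    ∑ k, (fderiv ℝ (fun y => f y / g y) x (e k)) ^ 2
      = ((∑ k, g (e k) ^ 2) * (f x / g x) ^ 2 - 2 * (∑ k, f (e k) * g (e k)) * (f x / g x)
          + ∑ k, f (e k) ^ 2) / g x ^ 2 := by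
  simp only [Finset.sum_mul, Finset.mul_sum, ← Finset.sum_sub_distrib, ← Finset.sum_add_distrib,
    Finset.sum_div]
  refine Finset.sum_congr rfl fun k _ => ?_
  rw [f.fderiv_div_apply g hx]
  field_simp
  ring

theorem sum_fderiv_fderiv_div_apply (hx : g x ≠ 0) :
    ∑ k, fderiv ℝ (fun y => fderiv ℝ (fun z => f z / g z) y (e k)) x (e k)
      = (2 * (∑ k, g (e k) ^ 2) * (f x / g x) - 2 * ∑ k, f (e k) * g (e k)) / g x ^ 2 := by
  simp only [Finset.sum_mul, Finset.mul_sum, ← Finset.sum_sub_distrib, Finset.sum_div]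
  refine Finset.sum_congr rfl fun k _ => ?_
  rw [f.fderiv_fderiv_div_apply g hx]
  field_simp
  ring

end DilationInvariant

section TruncatedForm

variable {n : ℕ} (m : ℕ) (a : Fin n → ℝ)

noncomputable def truncatedForm : (Fin n → ℝ) →L[ℝ] ℝ :=
  LinearMap.toContinuousLinearMap (dotProductBilin ℝ ℝ fun i => if (i : ℕ) < m then a i else 0)

theorem truncatedForm_apply (y : Fin n → ℝ) :
    truncatedForm m a y = ∑ i : Fin n, if (i : ℕ) < m then a i * y i else 0 := by
  simp [truncatedForm, dotProduct, ite_mul]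

theorem truncatedForm_single (k : Fin n) :
    truncatedForm m a (Pi.single k 1) = if (k : ℕ) < m then a k else 0 := by
  simp [truncatedForm]

end TruncatedForm

theorem dilation_invariant_fundamental_relation_general
    (n : ℕ) (m₁ m₂ : ℕ) (hm₁₂ : m₁ ≤ m₂)
    (a b : Fin n → ℝ)
    (M P ξ : (Fin n → ℝ) → ℝ)
    (hM : M = fun x => ∑ i : Fin n, if (i : ℕ) < m₁ then a i * x i else 0)
    (hP : P = fun x => ∑ j : Fin n, if (j : ℕ) < m₂ then b j * x j else 0)
    (hξ : ξ = fun x => M x / P x)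
    (η θ δ : ℝ)
    (hη : η = ∑ j : Fin n, if (j : ℕ) < m₂ then (b j) ^ 2 else 0)
    (hθ : θ = -2 * ∑ i : Fin n, if (i : ℕ) < m₁ then a i * b i else 0)
    (hδ : δ = ∑ i : Fin n, if (i : ℕ) < m₁ then (a i) ^ 2 else 0)
    (Q Q' : ℝ → ℝ)
    (hQ : Q = fun t => η * t ^ 2 + θ * t + δ)
    (hQ' : Q' = fun t => 2 * η * t + θ) :
    ∀ x : Fin n → ℝ, P x ≠ 0 →
      Q (ξ x) * ∑ k : Fin n, pd k (pd k ξ) x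
        = (∑ k : Fin n, (pd k ξ x) ^ 2) * Q' (ξ x) := by
  intro x hx
  set f := truncatedForm m₁ a
  set g := truncatedForm m₂ b
  have hξfg : ξ = fun y => f y / g y := by simp only [hξ, hM, hP, f, g, truncatedForm_apply]
  have hgx : g x ≠ 0 := by simpa only [hP, g, truncatedForm_apply] using hx
  have hη' : η = ∑ k, g (Pi.single k 1) ^ 2 := by simp [hη, g, truncatedForm_single, ite_pow]
  have hδ' : δ = ∑ k, f (Pi.single k 1) ^ 2 := by simp [hδ, f, truncatedForm_single, ite_pow]
  have hθ' : θ = -2 * ∑ k, f (Pi.single k 1) * g (Pi.single k 1) := by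
    rw [hθ]
    congr 1
    refine Finset.sum_congr rfl fun k _ => ?_
    simp only [f, g, truncatedForm_single]
    split_ifs <;> first | omega | ring
  unfold pd
  rw [hξfg, sum_fderiv_fderiv_div_apply f g _ hgx, sum_sq_fderiv_div_apply f g _ hgx, hQ, hQ',
    hη', hθ', hδ']
  field_simp
  ring

/-- the fundamental relation `Q(ξ)·Δξ = |∇ξ|²·Q'(ξ)` for the
dilation invariant `ξ = M/P`, where `Q(t) = ηt² + θt + δ`. -/
theorem dilation_invariant_fundamental_relation
    (n : ℕ) (hn : 1 ≤ n) (m₁ m₂ : ℕ) (hm₁ : 1 ≤ m₁) (hm₁₂ : m₁ ≤ m₂) (hm₂ : m₂ ≤ n)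
    (a b : Fin n → ℝ)
    (M P ξ : (Fin n → ℝ) → ℝ)
    (hM : M = fun x => ∑ i : Fin n, if (i : ℕ) < m₁ then a i * x i else 0)
    (hP : P = fun x => ∑ j : Fin n, if (j : ℕ) < m₂ then b j * x j else 0)
    (hξ : ξ = fun x => M x / P x)
    (η θ δ : ℝ)
    (hη : η = ∑ j : Fin n, if (j : ℕ) < m₂ then (b j) ^ 2 else 0)
    (hθ : θ = -2 * ∑ i : Fin n, if (i : ℕ) < m₁ then a i * b i else 0)
    (hδ : δ = ∑ i : Fin n, if (i : ℕ) < m₁ then (a i) ^ 2 else 0)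
    (Q Q' : ℝ → ℝ)
    (hQ : Q = fun t => η * t ^ 2 + θ * t + δ)
    (hQ' : Q' = fun t => 2 * η * t + θ) :
    ∀ x : Fin n → ℝ, P x ≠ 0 →
      Q (ξ x) * ∑ k : Fin n, pd k (pd k ξ) x
        = (∑ k : Fin n, (pd k ξ x) ^ 2) * Q' (ξ x) :=
  dilation_invariant_fundamental_relation_general n m₁ m₂ hm₁₂ a b M P ξ hM hP hξ η θ δ hη hθ hδ Q
    Q' hQ hQ'
end

section
/- Let n ≥ 3 and let τ, Λ ∈ ℝ and γₖ, θₖ ∈ ℝ for 1 ≤ k ≤ n. Define ξ : ℝⁿ → ℝ by ξ(x) = Σ_{k=1}^{n} (τxₖ² + γₖxₖ + θₖ) and set β = Σ_{k=1}^{n} (γₖ² − 4τθₖ). Let φ, N, ψ : ℝ → ℝ be smooth with φ > 0 and N > 0, satisfying for all t ∈ ℝ: (a) (n−2)φ''N − φN'' − 2φ'N' + (2φ/N)(ψ')² = 0; (b) [φφ''N − (n−1)(φ')²N + φφ'N' − (2φ²/((n−1)N))(ψ')²]·(4τt + β) + 2τφ·[2(n−1)φ'N − φN'] = (2Λ/(n−1))·N;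 (c) 2nτφψ'N + [φψ''N − (n−2)φ'ψ'N − φψ'N']·(4τt + β) = 0; (d) φ·[φNN'' − (n−2)φ'NN' − (2(n−2)/(n−1))φ(ψ')²]·(4τt + β) + 2nτφ²NN' = −(2Λ/(n−1))·N². Then the composite functions φ∘ξ, N∘ξ, ψ∘ξ satisfy the electrostatic PDE system with cosmological constant Λ on ℝⁿ. -/
open scoped ContDiff


noncomputable def prj {n : ℕ} (k : Fin n) : (Fin n → ℝ) →L[ℝ] ℝ :=
  ContinuousLinearMap.proj (R := ℝ) (φ := fun _ : Fin n => ℝ) k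

noncomputable def qL {n : ℕ} (τ : ℝ) (γ : Fin n → ℝ) (x : Fin n → ℝ) : (Fin n → ℝ) →L[ℝ] ℝ :=
  ∑ k, (2*τ*x k + γ k) • prj k

lemma qL_apply {n : ℕ} (τ : ℝ) (γ : Fin n → ℝ) (x : Fin n → ℝ) (i : Fin n) :
    qL τ γ x (Pi.single i 1) = 2*τ*x i + γ i := by
  simp [qL, prj, ContinuousLinearMap.sum_apply, Pi.single_apply]

lemma hasFDerivAt_xi {n : ℕ} (τ : ℝ) (γ θc : Fin n → ℝ) (x : Fin n → ℝ) :
    HasFDerivAt (fun x : Fin n → ℝ => ∑ k, (τ * (x k)^2 + γ k * x k + θc k))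
      (qL τ γ x) x := by
  apply HasFDerivAt.fun_sum
  intro k _
  have h1 : HasDerivAt (fun s : ℝ => τ * s^2 + γ k * s + θc k) (2*τ*x k + γ k) (x k) := by
    have := (((hasDerivAt_pow 2 (x k)).const_mul τ).add ((hasDerivAt_id (x k)).const_mul (γ k))).add_const (θc k)
    refine this.congr_deriv ?_
    simp; ring
  have h2 : HasFDerivAt (fun x : Fin n → ℝ => x k) (prj k) x := (prj k).hasFDerivAt
  exact h1.comp_hasFDerivAt x h2

lemma hasFDerivAt_comp_xi {n : ℕ} (τ : ℝ) (γ θc : Fin n → ℝ)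
    (ξ : (Fin n → ℝ) → ℝ)
    (hξ : ξ = fun x => ∑ k : Fin n, (τ * (x k) ^ 2 + γ k * x k + θc k))
    (f : ℝ → ℝ) (hf : Differentiable ℝ f) (x : Fin n → ℝ) :
    HasFDerivAt (fun x => f (ξ x)) (deriv f (ξ x) • qL τ γ x) x := by
  subst hξ
  exact (hf _).hasDerivAt.comp_hasFDerivAt x (hasFDerivAt_xi τ γ θc x)

lemma pd_comp_xi {n : ℕ} (τ : ℝ) (γ θc : Fin n → ℝ)
    (ξ : (Fin n → ℝ) → ℝ)
    (hξ : ξ = fun x => ∑ k : Fin n, (τ * (x k) ^ 2 + γ k * x k + θc k))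
    (f : ℝ → ℝ) (hf : Differentiable ℝ f) (i : Fin n) (x : Fin n → ℝ) :
    pd i (fun x => f (ξ x)) x = deriv f (ξ x) * (2*τ*x i + γ i) := by
  unfold pd
  rw [(hasFDerivAt_comp_xi τ γ θc ξ hξ f hf x).fderiv]
  simp [qL_apply]

lemma pd_pd_comp_xi {n : ℕ} (τ : ℝ) (γ θc : Fin n → ℝ)
    (ξ : (Fin n → ℝ) → ℝ)
    (hξ : ξ = fun x => ∑ k : Fin n, (τ * (x k) ^ 2 + γ k * x k + θc k))
    (f : ℝ → ℝ) (hf : ContDiff ℝ ∞ f) (i j : Fin n) (x : Fin n → ℝ) :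
    pd i (pd j (fun x => f (ξ x))) x
      = deriv (deriv f) (ξ x) * (2*τ*x i + γ i) * (2*τ*x j + γ j)
        + deriv f (ξ x) * (if i = j then 2*τ else 0) := by
  have hf' : Differentiable ℝ f := hf.differentiable (by simp)
  have hdf : Differentiable ℝ (deriv f) :=
    (contDiff_infty_iff_deriv.mp hf).2.differentiable (by simp)
  have hrw : pd j (fun x => f (ξ x)) = fun x => deriv f (ξ x) * (2*τ*x j + γ j) :=
    funext fun y => pd_comp_xi τ γ θc ξ hξ f hf' j y
  rw [hrw]
  unfold pd
  have h1 : HasFDerivAt (fun x : Fin n → ℝ => deriv f (ξ x))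
      (deriv (deriv f) (ξ x) • qL τ γ x) x :=
    hasFDerivAt_comp_xi τ γ θc ξ hξ (deriv f) hdf x
  have h2 : HasFDerivAt (fun x : Fin n → ℝ => 2*τ*x j + γ j)
      ((2*τ) • prj j) x := by
    have := ((prj (n := n) j).hasFDerivAt (x := x)).const_mul (2*τ)
    exact this.add_const (γ j)
  rw [(h1.fun_mul h2).fderiv]
  simp [qL_apply, prj, Pi.single_apply]
  by_cases h : i = j
  · subst h; simp; ring
  · rw [if_neg h, if_neg (Ne.symm h)]; ring

/-- converse direction of Theorem 1.1, item (2): the quadratic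
ansatz `ξ = Σ(τxₖ² + γₖxₖ + θₖ)` turns solutions of the reduced ODE system into
solutions of the electrostatic PDE system. -/
theorem quadratic_ansatz_converse
    (n : ℕ) (hn : 3 ≤ n) (τ Λ : ℝ) (γ θc : Fin n → ℝ)
    (ξ : (Fin n → ℝ) → ℝ)
    (hξ : ξ = fun x => ∑ k : Fin n, (τ * (x k) ^ 2 + γ k * x k + θc k))
    (β : ℝ) (hβ : β = ∑ k : Fin n, ((γ k) ^ 2 - 4 * τ * θc k))
    (φ N ψ : ℝ → ℝ)
    (hφs : ContDiff ℝ (⊤ : ℕ∞) φ) (hNs : ContDiff ℝ (⊤ : ℕ∞) N) (hψs : ContDiff ℝ (⊤ : ℕ∞) ψ)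
    (hφpos : ∀ t : ℝ, 0 < φ t) (hNpos : ∀ t : ℝ, 0 < N t)
    (ha : ∀ t : ℝ,
      ((n : ℝ) - 2) * deriv (deriv φ) t * N t - φ t * deriv (deriv N) t
        - 2 * deriv φ t * deriv N t + (2 * φ t / N t) * (deriv ψ t) ^ 2 = 0)
    (hb : ∀ t : ℝ,
      (φ t * deriv (deriv φ) t * N t - ((n : ℝ) - 1) * (deriv φ t) ^ 2 * N t
          + φ t * deriv φ t * deriv N t
          - (2 * (φ t) ^ 2 / (((n : ℝ) - 1) * N t)) * (deriv ψ t) ^ 2) * (4 * τ * t + β)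
        + 2 * τ * φ t * (2 * ((n : ℝ) - 1) * deriv φ t * N t - φ t * deriv N t)
        = (2 * Λ / ((n : ℝ) - 1)) * N t)
    (hc : ∀ t : ℝ,
      2 * (n : ℝ) * τ * φ t * deriv ψ t * N t
        + (φ t * deriv (deriv ψ) t * N t - ((n : ℝ) - 2) * deriv φ t * deriv ψ t * N t
          - φ t * deriv ψ t * deriv N t) * (4 * τ * t + β) = 0)
    (hd : ∀ t : ℝ,
      φ t * (φ t * N t * deriv (deriv N) t - ((n : ℝ) - 2) * deriv φ t * N t * deriv N t
          - (2 * ((n : ℝ) - 2) / ((n : ℝ) - 1)) * φ t * (deriv ψ t) ^ 2) * (4 * τ * t + β)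
        + 2 * (n : ℝ) * τ * (φ t) ^ 2 * N t * deriv N t
        = -(2 * Λ / ((n : ℝ) - 1)) * (N t) ^ 2) :
    ElectrostaticSystem Set.univ (fun x => φ (ξ x)) (fun x => N (ξ x)) (fun x => ψ (ξ x)) Λ := by

  intro x _
  have hφ8 : ContDiff ℝ ∞ φ := hφs.of_le (by simp)
  have hN8 : ContDiff ℝ ∞ N := hNs.of_le (by simp)
  have hψ8 : ContDiff ℝ ∞ ψ := hψs.of_le (by simp)
  have hle : (1 : WithTop ℕ∞) ≤ ∞ := by exact_mod_cast le_top
  have hφd : Differentiable ℝ φ := hφ8.differentiable (by simp)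
  have hNd : Differentiable ℝ N := hN8.differentiable (by simp)
  have hψd : Differentiable ℝ ψ := hψ8.differentiable (by simp)
  have keysum : ∑ k : Fin n, (2*τ*x k + γ k)^2 = 4*τ*(ξ x) + β := by
    rw [hξ, hβ]
    simp only
    rw [Finset.mul_sum, ← Finset.sum_add_distrib]
    exact Finset.sum_congr rfl fun k _ => by ring
  have p1 : ∀ (f : ℝ → ℝ), Differentiable ℝ f → ∀ i : Fin n,
      pd i (fun y => f (ξ y)) x = deriv f (ξ x) * (2*τ*x i + γ i) :=
    fun f hf i => pd_comp_xi τ γ θc ξ hξ f hf i x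
  have p2 : ∀ (f : ℝ → ℝ), ContDiff ℝ ∞ f → ∀ i j : Fin n,
      pd i (pd j (fun y => f (ξ y))) x
        = deriv (deriv f) (ξ x) * (2*τ*x i + γ i) * (2*τ*x j + γ j)
          + deriv f (ξ x) * (if i = j then 2*τ else 0) :=
    fun f hf i j => pd_pd_comp_xi τ γ θc ξ hξ f hf i j x
  beta_reduce
  refine ⟨?_, ?_, ?_, ?_⟩
  · intro i j hij
    rw [p2 φ hφ8 i j, p2 N hN8 i j, p1 φ hφd i, p1 φ hφd j, p1 N hNd i, p1 N hNd j,
      p1 ψ hψd i, p1 ψ hψd j, if_neg hij]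
    linear_combination ((2*τ*x i + γ i)*(2*τ*x j + γ j)) * ha (ξ x)
  · intro i
    have step : ∀ k : Fin n,
        (φ (ξ x) * N (ξ x) * pd k (pd k (fun x => φ (ξ x))) x
          + φ (ξ x) * pd k (fun x => φ (ξ x)) x * pd k (fun x => N (ξ x)) x
          - ((n : ℝ) - 1) * N (ξ x) * (pd k (fun x => φ (ξ x)) x) ^ 2
          - (2 / (((n : ℝ) - 1) * N (ξ x))) * (φ (ξ x)) ^ 2 * (pd k (fun x => ψ (ξ x)) x) ^ 2)
        = (φ (ξ x) * N (ξ x) * deriv (deriv φ) (ξ x)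
            + φ (ξ x) * deriv φ (ξ x) * deriv N (ξ x)
            - ((n : ℝ) - 1) * N (ξ x) * (deriv φ (ξ x)) ^ 2
            - (2 / (((n : ℝ) - 1) * N (ξ x))) * (φ (ξ x)) ^ 2 * (deriv ψ (ξ x)) ^ 2)
            * (2*τ*x k + γ k) ^ 2
          + 2 * τ * (φ (ξ x) * N (ξ x) * deriv φ (ξ x)) := by
      intro k
      rw [p2 φ hφ8 k k, p1 φ hφd k, p1 N hNd k, p1 ψ hψd k, if_pos rfl]
      ring
    rw [Finset.sum_congr rfl fun k _ => step k, Finset.sum_add_distrib, ← Finset.mul_sum,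
      keysum, Finset.sum_const, Finset.card_univ, Fintype.card_fin, nsmul_eq_mul,
      p2 φ hφ8 i i, p2 N hN8 i i, p1 φ hφd i, p1 N hNd i, p1 ψ hψd i, if_pos rfl]
    linear_combination (φ (ξ x) * (2*τ*x i + γ i)^2) * ha (ξ x) + hb (ξ x)
  · have step : ∀ k : Fin n,
        (N (ξ x) * φ (ξ x) * pd k (pd k (fun x => ψ (ξ x))) x
          - ((n : ℝ) - 2) * N (ξ x) * pd k (fun x => φ (ξ x)) x * pd k (fun x => ψ (ξ x)) x
          - φ (ξ x) * pd k (fun x => ψ (ξ x)) x * pd k (fun x => N (ξ x)) x)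
        = (N (ξ x) * φ (ξ x) * deriv (deriv ψ) (ξ x)
            - ((n : ℝ) - 2) * N (ξ x) * deriv φ (ξ x) * deriv ψ (ξ x)
            - φ (ξ x) * deriv ψ (ξ x) * deriv N (ξ x)) * (2*τ*x k + γ k) ^ 2
          + 2 * τ * (N (ξ x) * φ (ξ x) * deriv ψ (ξ x)) := by
      intro k
      rw [p2 ψ hψ8 k k, p1 φ hφd k, p1 N hNd k, p1 ψ hψd k, if_pos rfl]
      ring
    rw [Finset.sum_congr rfl fun k _ => step k, Finset.sum_add_distrib, ← Finset.mul_sum,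
      keysum, Finset.sum_const, Finset.card_univ, Fintype.card_fin, nsmul_eq_mul]
    linear_combination hc (ξ x)
  · have step : ∀ k : Fin n,
        ((φ (ξ x)) ^ 2 * N (ξ x) * pd k (pd k (fun x => N (ξ x))) x
          - ((n : ℝ) - 2) * φ (ξ x) * pd k (fun x => φ (ξ x)) x * N (ξ x) * pd k (fun x => N (ξ x)) x
          - (2 * ((n : ℝ) - 2) / ((n : ℝ) - 1)) * (φ (ξ x)) ^ 2 * (pd k (fun x => ψ (ξ x)) x) ^ 2)
        = ((φ (ξ x)) ^ 2 * N (ξ x) * deriv (deriv N) (ξ x)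
            - ((n : ℝ) - 2) * φ (ξ x) * deriv φ (ξ x) * N (ξ x) * deriv N (ξ x)
            - (2 * ((n : ℝ) - 2) / ((n : ℝ) - 1)) * (φ (ξ x)) ^ 2 * (deriv ψ (ξ x)) ^ 2)
            * (2*τ*x k + γ k) ^ 2
          + 2 * τ * ((φ (ξ x)) ^ 2 * N (ξ x) * deriv N (ξ x)) := by
      intro k
      rw [p2 N hN8 k k, p1 φ hφd k, p1 N hNd k, p1 ψ hψd k, if_pos rfl]
      ring
    rw [Finset.sum_congr rfl fun k _ => step k, Finset.sum_add_distrib, ← Finset.mul_sum,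
      keysum, Finset.sum_const, Finset.card_univ, Fintype.card_fin, nsmul_eq_mul]
    linear_combination hd (ξ x)
end
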